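/- arXiv:2106.05218 — 8 statements merged into one kernel-verified Lean document; each statement's English description precedes it below -/
import Mathlib

section
/- Let X be a normed vector space over ℂ, let L, U : X → X be continuous linear operators, let N ≥ 2 be an integer with L^N = 0 and U^N = 0 (N-fold composition), and let n ≥ N. Then for every v ∈ X, ‖(L + U)^n v‖ ≤ 2·(∑_{j=1}^{n−1} C(n−1, j) · max_w ‖m_w(L,U)‖) · ‖v‖, where for each j the maximum is over the (nonempty, finite) set of words w of length n with exactly j transitions, ‖m_w(L,U)‖ is the operator norm of the composition m_w(L,U), and C denotes the binomial coefficient. -/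
/-! Expanding `(L + U) ^ n` without commutativity gives the sum of the monomials of all `2 ^ n`
words of length `n`. A word without transitions has monomial `L ^ n` or `U ^ n`, which vanishes
since `n ≥ N`. A word is determined by its first letter and its set of transitions, so at most
`2 * (n - 1).choose j` words have `j` transitions, and the norm of each of their monomials is at
most the supremum over that class. -/

/-- Value of a word `w : Fin n → Bool` at a natural index, `false` out of range. -/
def wordGet {n : ℕ} (w : Fin n → Bool) (i : ℕ) : Bool :=
  if h : i < n then w ⟨i, h⟩ else false

/-- The number of transitions of a word `w : Fin n → Bool`, i.e. the number of indices
`i` with `0 ≤ i < n - 1` and `w i ≠ w (i+1)`. -/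
def transitions {n : ℕ} (w : Fin n → Bool) : ℕ :=
  ((Finset.range (n - 1)).filter fun i => wordGet w i ≠ wordGet w (i + 1)).card

/-- The monomial `m_w(L,U) = c₀ ∘ c₁ ∘ ⋯ ∘ c_{n-1}` of a word `w : Fin n → Bool`,
where `cᵢ = L` if `w i = true` and `cᵢ = U` if `w i = false` (in the monoid of
continuous linear operators, multiplication is composition). -/
def wordProd {M : Type*} [Monoid M] {n : ℕ} (w : Fin n → Bool) (x y : M) : M :=
  (List.ofFn fun i : Fin n => if w i then x else y).prod

section WordProd

variable {M : Type*} [Monoid M] {n : ℕ}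

lemma wordProd_cons (b : Bool) (w : Fin n → Bool) (x y : M) :
    wordProd (Fin.cons b w) x y = (if b then x else y) * wordProd w x y := by
  simp [wordProd, List.ofFn_succ]

lemma wordProd_const (b : Bool) (x y : M) :
    wordProd (fun _ : Fin n => b) x y = (if b then x else y) ^ n := by
  rw [wordProd, List.ofFn_const, List.prod_replicate]

end WordProd

lemma add_pow_eq_sum_wordProd {R : Type*} [Semiring R] (x y : R) :
    ∀ n : ℕ, (x + y) ^ n = ∑ w : Fin n → Bool, wordProd w x y
  | 0 => by simp [wordProd]
  | n + 1 => by
    rw [pow_succ', add_pow_eq_sum_wordProd x y n, add_mul, Finset.mul_sum, Finset.mul_sum,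
      ← (Fin.consEquiv fun _ => Bool).sum_comp, Fintype.sum_prod_type, Fintype.sum_bool]
    simp [Fin.consEquiv, wordProd_cons]

section Transitions

variable {n : ℕ}

def transitionSet (w : Fin n → Bool) : Finset ℕ :=
  (Finset.range (n - 1)).filter fun i => wordGet w i ≠ wordGet w (i + 1)

lemma card_transitionSet (w : Fin n → Bool) : (transitionSet w).card = transitions w := rfl

lemma transitions_le (w : Fin n → Bool) : transitions w ≤ n - 1 :=
  (Finset.card_filter_le _ _).trans (Finset.card_range _).le

lemma wordGet_succ {w : Fin n → Bool} {i : ℕ} (hi : i + 1 < n) :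
    wordGet w (i + 1) = (wordGet w i ^^ decide (i ∈ transitionSet w)) := by
  have hi' : i < n - 1 := by omega
  cases h : wordGet w i <;> cases h' : wordGet w (i + 1) <;>
    simp [transitionSet, hi', h, h']

lemma eq_of_wordGet_zero_eq_of_transitionSet_eq {w w' : Fin n → Bool}
    (h0 : wordGet w 0 = wordGet w' 0) (hT : transitionSet w = transitionSet w') :
    w = w' := by
  have key : ∀ i, wordGet w i = wordGet w' i := by
    intro i
    induction i with
    | zero => exact h0
    | succ i ih =>
      by_cases hi : i + 1 < n
      · rw [wordGet_succ hi, wordGet_succ hi, ih, hT]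
      · simp [wordGet, hi]
  funext i
  simpa [wordGet] using key i

lemma transitionSet_const (b : Bool) : transitionSet (fun _ : Fin n => b) = ∅ := by
  ext i
  simp only [transitionSet, wordGet, Finset.mem_filter, Finset.mem_range,
    Finset.notMem_empty, iff_false, not_and, not_not]
  intro hi
  simp [show i < n by omega, show i + 1 < n by omega]

lemma eq_const_of_transitions_eq_zero {w : Fin n → Bool} (h : transitions w = 0) :
    w = fun _ => wordGet w 0 := by
  refine eq_of_wordGet_zero_eq_of_transitionSet_eq ?_ ?_
  · unfold wordGet; split_ifs <;> rfl
  · rw [transitionSet_const]; exact Finset.card_eq_zero.1 ((card_transitionSet w).trans h)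

lemma wordProd_eq_zero_of_transitions_eq_zero {M : Type*} [MonoidWithZero M] {x y : M}
    (hx : x ^ n = 0) (hy : y ^ n = 0) {w : Fin n → Bool} (h : transitions w = 0) :
    wordProd w x y = 0 := by
  rw [eq_const_of_transitions_eq_zero h, wordProd_const]
  cases wordGet w 0 <;> simpa

lemma card_filter_transitions_eq_le (j : ℕ) :
    (Finset.univ.filter fun w : Fin n → Bool => transitions w = j).card
      ≤ 2 * (n - 1).choose j := by
  calc _ ≤ ((Finset.univ : Finset Bool) ×ˢ (Finset.range (n - 1)).powersetCard j).card := by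
        refine Finset.card_le_card_of_injOn (fun w => (wordGet w 0, transitionSet w)) ?_ ?_
        · intro w hw
          have hj : (transitionSet w).card = j :=
            (card_transitionSet w).trans (Finset.mem_filter.1 (Finset.mem_coe.1 hw)).2
          exact Finset.mem_product.2 ⟨Finset.mem_univ _,
            Finset.mem_powersetCard.2 ⟨Finset.filter_subset _ _, hj⟩⟩
        · intro w _ w' _ h
          exact eq_of_wordGet_zero_eq_of_transitionSet_eq (congrArg Prod.fst h)
            (congrArg Prod.snd h)
    _ = 2 * (n - 1).choose j := by simp

end Transitions

section Fibers

variable {n : ℕ} (f : (Fin n → Bool) → ℝ)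

lemma sum_filter_transitions_eq_le (hf : ∀ w, 0 ≤ f w) (j : ℕ) :
    ∑ w ∈ Finset.univ.filter (fun w => transitions w = j), f w
      ≤ 2 * (n - 1).choose j * ⨆ w : {w : Fin n → Bool // transitions w = j}, f w.1 := by
  calc _ ≤ (Finset.univ.filter fun w : Fin n → Bool => transitions w = j).card •
        ⨆ w : {w : Fin n → Bool // transitions w = j}, f w.1 :=
        Finset.sum_le_card_nsmul _ _ _ fun w hw =>
          le_ciSup (f := fun w : {w : Fin n → Bool // transitions w = j} => f w.1)
            (Finite.bddAbove_range _) ⟨w, (Finset.mem_filter.1 hw).2⟩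
    _ ≤ _ := by
        rw [nsmul_eq_mul]
        gcongr
        · exact Real.iSup_nonneg fun w => hf w.1
        · exact_mod_cast card_filter_transitions_eq_le j

lemma sum_le_two_mul_sum_choose_mul_iSup (hf : ∀ w, 0 ≤ f w)
    (hf₀ : ∀ w, transitions w = 0 → f w = 0) :
    ∑ w, f w ≤ 2 * ∑ j ∈ Finset.Icc 1 (n - 1),
      (n - 1).choose j * ⨆ w : {w : Fin n → Bool // transitions w = j}, f w.1 := by
  have hfiber₀ : ∑ w ∈ Finset.univ.filter (fun w => transitions w = 0), f w = 0 :=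
    Finset.sum_eq_zero fun w hw => hf₀ w (Finset.mem_filter.1 hw).2
  rw [← Finset.sum_fiberwise_of_maps_to (t := Finset.Icc 0 (n - 1))
      fun w _ => Finset.mem_Icc.2 ⟨Nat.zero_le _, transitions_le w⟩,
    ← Finset.insert_Icc_add_one_left_eq_Icc (Nat.zero_le _), Finset.sum_insert (by simp),
    hfiber₀, zero_add, Finset.mul_sum]
  refine Finset.sum_le_sum fun j _ => ?_
  rw [← mul_assoc]
  exact sum_filter_transitions_eq_le f hf j

end Fibers

theorem norm_add_pow_apply_le_sum_choose_mul_sup_general {X : Type*} [NormedAddCommGroup X]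
    [NormedSpace ℂ X] (L U : X →L[ℂ] X) (N : ℕ)
    (hL : L ^ N = 0) (hU : U ^ N = 0) (n : ℕ) (hn : N ≤ n) (v : X) :
    ‖((L + U) ^ n) v‖ ≤
      2 * (∑ j ∈ Finset.Icc 1 (n - 1), ((n - 1).choose j : ℝ) *
        ⨆ w : {w : Fin n → Bool // transitions w = j}, ‖wordProd w.1 L U‖) * ‖v‖ := by
  have hnorm : ‖(L + U) ^ n‖ ≤ ∑ w : Fin n → Bool, ‖wordProd w L U‖ := by
    rw [add_pow_eq_sum_wordProd]
    exact norm_sum_le _ _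
  have hmonomials := sum_le_two_mul_sum_choose_mul_iSup (fun w => ‖wordProd w L U‖)
    (fun _ => norm_nonneg _) fun w hw => by
      rw [wordProd_eq_zero_of_transitions_eq_zero (pow_eq_zero_of_le hn hL)
        (pow_eq_zero_of_le hn hU) hw, norm_zero]
  calc ‖((L + U) ^ n) v‖ ≤ ‖(L + U) ^ n‖ * ‖v‖ := ((L + U) ^ n).le_opNorm v
    _ ≤ _ := by gcongr; exact hnorm.trans hmonomials

/-- **Corollary 4.6.** For continuous linear operators `L, U` on a complex normed
space with `L ^ N = 0 = U ^ N` (`N ≥ 2`) and any `n ≥ N`,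
`‖(L+U)^n v‖ ≤ 2 (∑_{j=1}^{n-1} C(n-1,j) max_{w ∈ 𝒫(n,j)} ‖m_w(L,U)‖) ‖v‖`,
the maximum over the (nonempty, finite) set of words of length `n` with exactly `j`
transitions being expressed as a supremum. -/
theorem norm_add_pow_apply_le_sum_choose_mul_sup {X : Type*} [NormedAddCommGroup X]
    [NormedSpace ℂ X] (L U : X →L[ℂ] X) (N : ℕ) (hN : 2 ≤ N)
    (hL : L ^ N = 0) (hU : U ^ N = 0) (n : ℕ) (hn : N ≤ n) (v : X) :
    ‖((L + U) ^ n) v‖ ≤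
      2 * (∑ j ∈ Finset.Icc 1 (n - 1), ((n - 1).choose j : ℝ) *
        ⨆ w : {w : Fin n → Bool // transitions w = j}, ‖wordProd w.1 L U‖) * ‖v‖ :=
  norm_add_pow_apply_le_sum_choose_mul_sup_general L U N hL hU n hn v
end

section
/- Let X be a normed vector space over ℂ, let L, U : X → X be continuous linear operators, and let ρ, γ ≥ 0 be reals such that for all v ∈ X: ‖L(Uv)‖ ≤ ρ‖Uv‖, ‖U(Lv)‖ ≤ ρ‖Lv‖, ‖L(Lv)‖ ≤ γ‖Lv‖, ‖U(Uv)‖ ≤ γ‖Uv‖, ‖Lv‖ ≤ √(γ²+ρ²)‖v‖ and ‖Uv‖ ≤ √(γ²+ρ²)‖v‖. Then for every integer n ≥ 2, every integer j with 1 ≤ j ≤ n−1, every word w of length n with exactly j transitions, and every v ∈ X: ‖m_w(L,U) v‖ ≤ √(γ²+ρ²) · ρ^j · γ^{n−1−j} · ‖v‖. -/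
open Finset

theorem wordProd_succ {M : Type*} [Monoid M] {n : ℕ} (w : Fin (n + 1) → Bool) (x y : M) :
    wordProd w x y = (if w 0 then x else y) * wordProd (Fin.tail w) x y := by
  rw [wordProd, List.ofFn_succ, List.prod_cons]
  rfl

theorem wordProd_fin_one {M : Type*} [Monoid M] (w : Fin 1 → Bool) (x y : M) :
    wordProd w x y = if w 0 then x else y := by
  simp [wordProd]

theorem wordGet_tail {n : ℕ} (w : Fin (n + 1) → Bool) (i : ℕ) :
    wordGet (Fin.tail w) i = wordGet w (i + 1) := by
  simp only [wordGet, Fin.tail, add_lt_add_iff_right]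
  split_ifs <;> rfl

theorem prod_range_ite_ne_eq_pow_transitions {M : Type*} [CommMonoid M] {n : ℕ}
    (w : Fin n → Bool) (ρ γ : M) :
    ∏ i ∈ range (n - 1), (if wordGet w i ≠ wordGet w (i + 1) then ρ else γ) =
      ρ ^ transitions w * γ ^ (n - 1 - transitions w) := by
  have hcard := card_filter_add_card_filter_not (s := range (n - 1))
    (fun i => wordGet w i ≠ wordGet w (i + 1))
  rw [card_range] at hcard
  rw [prod_ite, prod_const, prod_const, transitions]
  congr 2
  omega

theorem norm_wordProd_apply_le_mul_prod {R E : Type*} [Semiring R] [SeminormedAddCommGroup E]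
    [Module R E] {L U : E →L[R] E} {s ρ γ : ℝ} (hρ : 0 ≤ ρ) (hγ : 0 ≤ γ)
    (hletter : ∀ (b : Bool) (v : E), ‖(if b then L else U) v‖ ≤ s * ‖v‖)
    (hpair : ∀ (a b : Bool) (v : E), ‖(if a then L else U) ((if b then L else U) v)‖ ≤
      (if a ≠ b then ρ else γ) * ‖(if b then L else U) v‖)
    {m : ℕ} (w : Fin (m + 1) → Bool) (v : E) :
    ‖wordProd w L U v‖ ≤
      s * (∏ i ∈ range m, if wordGet w i ≠ wordGet w (i + 1) then ρ else γ) * ‖v‖ := by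
  induction m with
  | zero => simpa [wordProd_fin_one] using hletter (w 0) v
  | succ m ih =>
    have hweight : 0 ≤ if w 0 ≠ w 1 then ρ else γ := by split_ifs <;> assumption
    calc ‖wordProd w L U v‖
        ≤ (if w 0 ≠ w 1 then ρ else γ) * ‖wordProd (Fin.tail w) L U v‖ := by
          rw [wordProd_succ, wordProd_succ (Fin.tail w)]
          exact hpair (w 0) (w 1) _
      _ ≤ (if w 0 ≠ w 1 then ρ else γ) * (s * (∏ i ∈ range m,
            if wordGet (Fin.tail w) i ≠ wordGet (Fin.tail w) (i + 1) then ρ else γ) * ‖v‖) :=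
          mul_le_mul_of_nonneg_left (ih _) hweight
      _ = s * (∏ i ∈ range (m + 1),
            if wordGet w i ≠ wordGet w (i + 1) then ρ else γ) * ‖v‖ := by
          have hw01 : wordGet w 0 = w 0 ∧ wordGet w 1 = w 1 := ⟨rfl, rfl⟩
          simp only [prod_range_succ', wordGet_tail, zero_add, hw01]
          ring

theorem norm_wordProd_apply_le_general {X : Type*} [NormedAddCommGroup X] [NormedSpace ℂ X]
    (L U : X →L[ℂ] X) (ρ γ : ℝ) (hρ : 0 ≤ ρ) (hγ : 0 ≤ γ)
    (hLU : ∀ v : X, ‖L (U v)‖ ≤ ρ * ‖U v‖)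
    (hUL : ∀ v : X, ‖U (L v)‖ ≤ ρ * ‖L v‖)
    (hLL : ∀ v : X, ‖L (L v)‖ ≤ γ * ‖L v‖)
    (hUU : ∀ v : X, ‖U (U v)‖ ≤ γ * ‖U v‖)
    (hL : ∀ v : X, ‖L v‖ ≤ Real.sqrt (γ ^ 2 + ρ ^ 2) * ‖v‖)
    (hU : ∀ v : X, ‖U v‖ ≤ Real.sqrt (γ ^ 2 + ρ ^ 2) * ‖v‖)
    (n : ℕ) (hn : 2 ≤ n) (j : ℕ)
    (w : Fin n → Bool) (hw : transitions w = j) (v : X) :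
    ‖(wordProd w L U) v‖ ≤
      Real.sqrt (γ ^ 2 + ρ ^ 2) * ρ ^ j * γ ^ (n - 1 - j) * ‖v‖ := by
  obtain ⟨m, rfl⟩ : ∃ m, n = m + 1 := ⟨n - 1, by omega⟩
  have hletter : ∀ (b : Bool) (v : X), ‖(if b then L else U) v‖ ≤
      Real.sqrt (γ ^ 2 + ρ ^ 2) * ‖v‖ := by
    rintro (_ | _) <;> assumption
  have hpair : ∀ (a b : Bool) (v : X), ‖(if a then L else U) ((if b then L else U) v)‖ ≤
      (if a ≠ b then ρ else γ) * ‖(if b then L else U) v‖ := by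
    rintro (_ | _) (_ | _) <;> simpa
  have hweights := prod_range_ite_ne_eq_pow_transitions w ρ γ
  rw [Nat.add_sub_cancel, hw] at hweights
  calc ‖wordProd w L U v‖
      ≤ Real.sqrt (γ ^ 2 + ρ ^ 2) * (∏ i ∈ range m,
          if wordGet w i ≠ wordGet w (i + 1) then ρ else γ) * ‖v‖ :=
        norm_wordProd_apply_le_mul_prod hρ hγ hletter hpair w v
    _ = Real.sqrt (γ ^ 2 + ρ ^ 2) * ρ ^ j * γ ^ (m + 1 - 1 - j) * ‖v‖ := by
        rw [hweights, Nat.add_sub_cancel]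
        ring

/-- **The key inequality (4.22) in the proof of Theorem 4.11.** Under the conclusions
of Lemma 4.10 for the operators `L, U`, any monomial of order `n ≥ 2` with
`1 ≤ j ≤ n-1` transitions satisfies
`‖m_w(L,U) v‖ ≤ √(γ²+ρ²) ρ^j γ^(n-1-j) ‖v‖`. -/
theorem norm_wordProd_apply_le {X : Type*} [NormedAddCommGroup X] [NormedSpace ℂ X]
    (L U : X →L[ℂ] X) (ρ γ : ℝ) (hρ : 0 ≤ ρ) (hγ : 0 ≤ γ)
    (hLU : ∀ v : X, ‖L (U v)‖ ≤ ρ * ‖U v‖)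
    (hUL : ∀ v : X, ‖U (L v)‖ ≤ ρ * ‖L v‖)
    (hLL : ∀ v : X, ‖L (L v)‖ ≤ γ * ‖L v‖)
    (hUU : ∀ v : X, ‖U (U v)‖ ≤ γ * ‖U v‖)
    (hL : ∀ v : X, ‖L v‖ ≤ Real.sqrt (γ ^ 2 + ρ ^ 2) * ‖v‖)
    (hU : ∀ v : X, ‖U v‖ ≤ Real.sqrt (γ ^ 2 + ρ ^ 2) * ‖v‖)
    (n : ℕ) (hn : 2 ≤ n) (j : ℕ) (hj1 : 1 ≤ j) (hj2 : j ≤ n - 1)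
    (w : Fin n → Bool) (hw : transitions w = j) (v : X) :
    ‖(wordProd w L U) v‖ ≤
      Real.sqrt (γ ^ 2 + ρ ^ 2) * ρ ^ j * γ ^ (n - 1 - j) * ‖v‖ :=
  norm_wordProd_apply_le_general L U ρ γ hρ hγ hLU hUL hLL hUU hL hU n hn j w hw v
end

section
/- Let X be a normed vector space over ℂ, let L, U : X → X be continuous linear operators, let N ≥ 2 be an integer with L^N = 0 and U^N = 0 (N-fold composition), and let ρ, γ ≥ 0 be reals such that for all v ∈ X: ‖L(Uv)‖ ≤ ρ‖Uv‖, ‖U(Lv)‖ ≤ ρ‖Lv‖, ‖L(Lv)‖ ≤ γ‖Lv‖, ‖U(Uv)‖ ≤ γ‖Uv‖, ‖Lv‖ ≤ √(γ²+ρ²)‖v‖ and ‖Uv‖ ≤ √(γ²+ρ²)‖v‖. Then for every v ∈ X: ‖(L + U)^N v‖ ≤ 2·√(γ²+ρ²)·((γ+ρ)^{N−1} − γ^{N−1})·‖v‖. -/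
private lemma aux_pure {X : Type*} [NormedAddCommGroup X] [NormedSpace ℂ X]
    (L : X →L[ℂ] X) (γ : ℝ) (hγ : 0 ≤ γ)
    (hLL : ∀ v : X, ‖L (L v)‖ ≤ γ * ‖L v‖) :
    ∀ n : ℕ, ∀ w : X, ‖(L ^ n) (L w)‖ ≤ γ ^ n * ‖L w‖ := by
  intro n
  induction n with
  | zero => intro w; simp
  | succ n ih =>
      intro w
      have h1 : ((L ^ (n + 1)) : X →L[ℂ] X) (L w) = (L ^ n) (L (L w)) := by
        rw [pow_succ]; rfl
      rw [h1]
      calc ‖(L ^ n) (L (L w))‖ ≤ γ ^ n * ‖L (L w)‖ := ih (L w)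
        _ ≤ γ ^ n * (γ * ‖L w‖) := by
            apply mul_le_mul_of_nonneg_left (hLL w)
            positivity
        _ = γ ^ (n + 1) * ‖L w‖ := by ring

private lemma aux_decomp {X : Type*} [NormedAddCommGroup X] [NormedSpace ℂ X]
    (L U : X →L[ℂ] X) (ρ γ : ℝ) (hρ : 0 ≤ ρ) (hγ : 0 ≤ γ)
    (hLU : ∀ v : X, ‖L (U v)‖ ≤ ρ * ‖U v‖)
    (hUL : ∀ v : X, ‖U (L v)‖ ≤ ρ * ‖L v‖)
    (hLL : ∀ v : X, ‖L (L v)‖ ≤ γ * ‖L v‖)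
    (hUU : ∀ v : X, ‖U (U v)‖ ≤ γ * ‖U v‖) :
    ∀ n : ℕ, ∀ w : X, ∃ p q : X,
      ((L + U) ^ n) (L w) = (L ^ n) (L w) + L p + U q ∧
      ‖L p‖ + ‖U q‖ ≤ ((γ + ρ) ^ n - γ ^ n) * ‖L w‖ := by
  intro n
  induction n with
  | zero =>
      intro w
      refine ⟨0, 0, by simp, by simp⟩
  | succ n ih =>
      intro w
      obtain ⟨p, q, heq, hbd⟩ := ih w
      refine ⟨L p + U q, (L ^ n) (L w) + L p + U q, ?_, ?_⟩
      · have h1 : ((L + U) ^ (n + 1)) (L w) = (L + U) (((L + U) ^ n) (L w)) := by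
          rw [pow_succ']; rfl
        have h2 : ((L ^ (n + 1)) : X →L[ℂ] X) (L w) = L ((L ^ n) (L w)) := by
          rw [pow_succ']; rfl
        rw [h1, heq, h2]
        simp only [ContinuousLinearMap.add_apply, map_add]
        abel
      · have hsL : ∃ s : X, ((L ^ n) : X →L[ℂ] X) (L w) = L s := by
          refine ⟨(L ^ n) w, ?_⟩
          have : ((L ^ n) : X →L[ℂ] X) (L w) = (L ^ n * L) w := rfl
          rw [this, ← pow_succ, pow_succ']
          rfl
        obtain ⟨s, hs⟩ := hsL
        have hpure : ‖((L ^ n) : X →L[ℂ] X) (L w)‖ ≤ γ ^ n * ‖L w‖ :=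
          aux_pure L γ hγ hLL n w
        have b1 : ‖L (L p + U q)‖ ≤ γ * ‖L p‖ + ρ * ‖U q‖ := by
          calc ‖L (L p + U q)‖ = ‖L (L p) + L (U q)‖ := by rw [map_add]
            _ ≤ ‖L (L p)‖ + ‖L (U q)‖ := norm_add_le _ _
            _ ≤ γ * ‖L p‖ + ρ * ‖U q‖ := add_le_add (hLL p) (hLU q)
        have b2 : ‖U ((L ^ n) (L w) + L p + U q)‖ ≤
            ρ * (γ ^ n * ‖L w‖) + ρ * ‖L p‖ + γ * ‖U q‖ := by
          calc ‖U ((L ^ n) (L w) + L p + U q)‖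
              = ‖U ((L ^ n) (L w)) + U (L p) + U (U q)‖ := by rw [map_add, map_add]
            _ ≤ ‖U ((L ^ n) (L w))‖ + ‖U (L p)‖ + ‖U (U q)‖ :=
                norm_add₃_le
            _ ≤ ρ * ‖(L ^ n) (L w)‖ + ρ * ‖L p‖ + γ * ‖U q‖ := by
                refine add_le_add (add_le_add ?_ (hUL p)) (hUU q)
                rw [hs]; exact hUL s
            _ ≤ ρ * (γ ^ n * ‖L w‖) + ρ * ‖L p‖ + γ * ‖U q‖ := by
                refine add_le_add (add_le_add ?_ le_rfl) le_rfl
                exact mul_le_mul_of_nonneg_left hpure hρ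
        have hnn : (0:ℝ) ≤ ‖L p‖ := norm_nonneg _
        have hnn' : (0:ℝ) ≤ ‖U q‖ := norm_nonneg _
        have hw : (0:ℝ) ≤ ‖L w‖ := norm_nonneg _
        have e1 : (γ + ρ) ^ (n + 1) = (γ + ρ) ^ n * (γ + ρ) := pow_succ _ _
        have e2 : γ ^ (n + 1) = γ ^ n * γ := pow_succ _ _
        nlinarith [b1, b2, hbd, mul_le_mul_of_nonneg_left hbd (add_nonneg hγ hρ)]

/-- **Theorem 4.11 (main contraction estimate for `𝓣^N`).** For continuous linear
operators `L, U` on a complex normed space with `L ^ N = 0 = U ^ N` (`N ≥ 2`),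
under the conclusions of Lemma 4.10,
`‖(L+U)^N v‖ ≤ 2 √(γ²+ρ²) ((γ+ρ)^(N-1) − γ^(N-1)) ‖v‖`. -/
theorem norm_add_pow_apply_le_contraction {X : Type*} [NormedAddCommGroup X]
    [NormedSpace ℂ X] (L U : X →L[ℂ] X) (N : ℕ) (hN : 2 ≤ N)
    (hLN : L ^ N = 0) (hUN : U ^ N = 0) (ρ γ : ℝ) (hρ : 0 ≤ ρ) (hγ : 0 ≤ γ)
    (hLU : ∀ v : X, ‖L (U v)‖ ≤ ρ * ‖U v‖)
    (hUL : ∀ v : X, ‖U (L v)‖ ≤ ρ * ‖L v‖)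
    (hLL : ∀ v : X, ‖L (L v)‖ ≤ γ * ‖L v‖)
    (hUU : ∀ v : X, ‖U (U v)‖ ≤ γ * ‖U v‖)
    (hL : ∀ v : X, ‖L v‖ ≤ Real.sqrt (γ ^ 2 + ρ ^ 2) * ‖v‖)
    (hU : ∀ v : X, ‖U v‖ ≤ Real.sqrt (γ ^ 2 + ρ ^ 2) * ‖v‖)
    (v : X) :
    ‖((L + U) ^ N) v‖ ≤
      2 * Real.sqrt (γ ^ 2 + ρ ^ 2) * ((γ + ρ) ^ (N - 1) - γ ^ (N - 1)) * ‖v‖ := by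
  obtain ⟨n, rfl⟩ : ∃ n, N = n + 1 := ⟨N - 1, by omega⟩
  have hswap : (U + L) = (L + U) := add_comm U L
  obtain ⟨p, q, heq1, hbd1⟩ := aux_decomp L U ρ γ hρ hγ hLU hUL hLL hUU n v
  obtain ⟨p', q', heq2, hbd2⟩ := aux_decomp U L ρ γ hρ hγ hUL hLU hUU hLL n v
  rw [hswap] at heq2
  have hsplit : ((L + U) ^ (n + 1)) v = ((L + U) ^ n) (L v) + ((L + U) ^ n) (U v) := by
    rw [pow_succ]
    show ((L + U) ^ n) ((L + U) v) = _
    rw [ContinuousLinearMap.add_apply, map_add]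
  have hL0 : ((L ^ n) : X →L[ℂ] X) (L v) = 0 := by
    have : ((L ^ n) : X →L[ℂ] X) (L v) = (L ^ (n + 1)) v := by
      rw [pow_succ]; rfl
    rw [this, hLN]; rfl
  have hU0 : ((U ^ n) : X →L[ℂ] X) (U v) = 0 := by
    have : ((U ^ n) : X →L[ℂ] X) (U v) = (U ^ (n + 1)) v := by
      rw [pow_succ]; rfl
    rw [this, hUN]; rfl
  rw [hsplit, heq1, heq2, hL0, hU0]
  have key : ‖(0 : X) + L p + U q + ((0 : X) + U p' + L q')‖ ≤
      ((γ + ρ) ^ n - γ ^ n) * (‖L v‖ + ‖U v‖) := by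
    calc ‖(0 : X) + L p + U q + ((0 : X) + U p' + L q')‖
        ≤ ‖(0 : X) + L p + U q‖ + ‖(0 : X) + U p' + L q'‖ := norm_add_le _ _
      _ ≤ (‖L p‖ + ‖U q‖) + (‖U p'‖ + ‖L q'‖) := by
          refine add_le_add ?_ ?_
          · rw [zero_add]; exact norm_add_le _ _
          · rw [zero_add]; exact norm_add_le _ _
      _ ≤ ((γ + ρ) ^ n - γ ^ n) * ‖L v‖ + ((γ + ρ) ^ n - γ ^ n) * ‖U v‖ :=
          add_le_add hbd1 hbd2
      _ = ((γ + ρ) ^ n - γ ^ n) * (‖L v‖ + ‖U v‖) := by ring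
  have hdnn : (0:ℝ) ≤ (γ + ρ) ^ n - γ ^ n := by
    have := pow_le_pow_left₀ hγ (le_add_of_nonneg_right hρ : γ ≤ γ + ρ) n
    linarith
  have hsum : ‖L v‖ + ‖U v‖ ≤ 2 * Real.sqrt (γ ^ 2 + ρ ^ 2) * ‖v‖ := by
    have := hL v; have := hU v; linarith
  calc ‖(0 : X) + L p + U q + ((0 : X) + U p' + L q')‖
      ≤ ((γ + ρ) ^ n - γ ^ n) * (‖L v‖ + ‖U v‖) := key
    _ ≤ ((γ + ρ) ^ n - γ ^ n) * (2 * Real.sqrt (γ ^ 2 + ρ ^ 2) * ‖v‖) :=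
        mul_le_mul_of_nonneg_left hsum hdnn
    _ = 2 * Real.sqrt (γ ^ 2 + ρ ^ 2) * ((γ + ρ) ^ (n + 1 - 1) - γ ^ (n + 1 - 1)) * ‖v‖ := by
        simp; ring
end

section
/- Let X be a normed vector space over ℂ, let L, U : X → X be continuous linear operators, let N ≥ 3 be an integer with L^N = 0 and U^N = 0 (N-fold composition), and let ρ, γ, ρ₀ be reals with 0 ≤ ρ ≤ ρ₀ ≤ γ such that for all v ∈ X: ‖L(Uv)‖ ≤ ρ‖Uv‖, ‖U(Lv)‖ ≤ ρ‖Lv‖, ‖L(Lv)‖ ≤ γ‖Lv‖, ‖U(Uv)‖ ≤ γ‖Uv‖, ‖Lv‖ ≤ √(γ²+ρ²)‖v‖ and ‖Uv‖ ≤ √(γ²+ρ²)‖v‖. Then for every v ∈ X: ‖(L + U)^N v‖ ≤ (2√2·γ^{N−1}·(N−1)·ρ + √2·(N−1)(N−2)·γ·(γ+ρ₀)^{N−3}·ρ²)·‖v‖. -/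
open Finset

section AuxCor412
variable {X : Type*} [NormedAddCommGroup X] [NormedSpace ℂ X]

private def opc (L U : X →L[ℂ] X) (b : Bool) : X →L[ℂ] X := bif b then L else U

private def applyWord (L U : X →L[ℂ] X) : List Bool → X → X
  | [], v => v
  | b :: l, v => opc L U b (applyWord L U l v)

private def decode (b : Bool) : List Bool → List Bool
  | [] => [b]
  | t :: d => b :: decode (if t then !b else b) d

private lemma decode_exists_cons (b : Bool) (l : List Bool) : ∃ r, decode b l = b :: r := by
  cases l <;> exact ⟨_, rfl⟩

private lemma decode_replicate (b : Bool) :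
    ∀ n, decode b (List.replicate n false) = List.replicate (n+1) b
  | 0 => rfl
  | n+1 => by
      simp [List.replicate_succ, decode, decode_replicate b n]

private lemma applyWord_replicate (L U : X →L[ℂ] X) (b : Bool) : ∀ (n : ℕ) (v : X),
    applyWord L U (List.replicate n b) v = ((opc L U b) ^ n) v
  | 0, v => by simp [applyWord]
  | n+1, v => by
      rw [List.replicate_succ, pow_succ', ContinuousLinearMap.mul_apply]
      show opc L U b (applyWord L U (List.replicate n b) v) = _
      rw [applyWord_replicate L U b n v]

private lemma expand (L U : X →L[ℂ] X) : ∀ (n : ℕ) (v : X),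
    ((L + U) ^ (n+1)) v =
      ∑ b : Bool, ∑ d : Fin n → Bool, applyWord L U (decode b (List.ofFn d)) v := by
  intro n
  induction n with
  | zero =>
      intro v
      simp [Fintype.sum_bool, applyWord, decode, opc, ContinuousLinearMap.add_apply]
  | succ n ih =>
      intro v
      have key : ((L + U) ^ (n+1+1)) v = (L + U) (((L + U) ^ (n+1)) v) := by
        rw [pow_succ', ContinuousLinearMap.mul_apply]
      rw [key, ih v]
      have reidx : ∀ b : Bool,
          (∑ d : Fin (n+1) → Bool, applyWord L U (decode b (List.ofFn d)) v) =
          ∑ t : Bool, ∑ d : Fin n → Bool,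
            applyWord L U (decode b (t :: List.ofFn d)) v := by
        intro b
        rw [← (Fin.consEquiv (fun _ : Fin (n+1) => Bool)).sum_comp
          (fun d => applyWord L U (decode b (List.ofFn d)) v)]
        rw [Fintype.sum_prod_type]
        refine Finset.sum_congr rfl fun t _ => Finset.sum_congr rfl fun d _ => ?_
        congr 1
        rw [List.ofFn_succ]
        simp [Fin.consEquiv]
      simp only [reidx]
      have hdec : ∀ (b c : Bool) (l : List Bool), c :: decode b l = decode c ((c != b) :: l) := by
        intro b c l
        show _ = c :: decode (if (c != b) then !c else c) l
        congr 2
        cases b <;> cases c <;> rfl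
      rw [ContinuousLinearMap.add_apply]
      simp only [Fintype.sum_bool]
      rw [map_add, map_add, map_sum, map_sum, map_sum, map_sum]
      have hLop : ∀ x : X, L x = opc L U true x := fun _ => rfl
      have hUop : ∀ x : X, U x = opc L U false x := fun _ => rfl
      simp only [hLop, hUop]
      have happ : ∀ (c : Bool) (l : List Bool) (w : X),
          opc L U c (applyWord L U l w) = applyWord L U (c :: l) w := fun _ _ _ => rfl
      simp only [happ, hdec]
      simp only [show (true != true) = false from rfl, show (true != false) = true from rfl,
        show (false != true) = true from rfl, show (false != false) = false from rfl]
      abel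

private lemma word_bound (L U : X →L[ℂ] X) (ρ γ : ℝ) (hρ : 0 ≤ ρ) (hγ : 0 ≤ γ)
    (hLU : ∀ v : X, ‖L (U v)‖ ≤ ρ * ‖U v‖)
    (hUL : ∀ v : X, ‖U (L v)‖ ≤ ρ * ‖L v‖)
    (hLL : ∀ v : X, ‖L (L v)‖ ≤ γ * ‖L v‖)
    (hUU : ∀ v : X, ‖U (U v)‖ ≤ γ * ‖U v‖)
    (hL : ∀ v : X, ‖L v‖ ≤ Real.sqrt (γ ^ 2 + ρ ^ 2) * ‖v‖)
    (hU : ∀ v : X, ‖U v‖ ≤ Real.sqrt (γ ^ 2 + ρ ^ 2) * ‖v‖) :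
    ∀ (l : List Bool) (b : Bool) (v : X),
      ‖applyWord L U (decode b l) v‖ ≤
        (Real.sqrt (γ ^ 2 + ρ ^ 2) * (l.map fun t => if t then ρ else γ).prod) * ‖v‖ := by
  have key : ∀ (b c : Bool) (w : X),
      ‖opc L U b (opc L U c w)‖ ≤ (if b = c then γ else ρ) * ‖opc L U c w‖ := by
    intro b c w
    cases b <;> cases c <;> simpa [opc] using (by first
      | exact hUU w | exact hUL w | exact hLU w | exact hLL w)
  intro l
  induction l with
  | nil =>
      intro b v
      show ‖opc L U b (applyWord L U [] v)‖ ≤ _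
      cases b <;> simpa [applyWord, opc] using (by first | exact hU v | exact hL v)
  | cons t l ih =>
      intro b v
      show ‖opc L U b (applyWord L U (decode (if t then !b else b) l) v)‖ ≤ _
      set c := if t then !b else b with hc
      obtain ⟨r, hr⟩ := decode_exists_cons c l
      have h1 : applyWord L U (decode c l) v = opc L U c (applyWord L U r v) := by
        rw [hr]; rfl
      have h2 := key b c (applyWord L U r v)
      rw [← h1] at h2
      have hcoeff : (if b = c then γ else ρ) = (if t then ρ else γ) := by
        cases t <;> cases b <;> simp [hc]
      rw [hcoeff] at h2
      have h3 := ih c v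
      have hcnn : 0 ≤ (if t then ρ else γ) := by split <;> assumption
      calc ‖opc L U b (applyWord L U (decode c l) v)‖
          ≤ (if t then ρ else γ) * ‖applyWord L U (decode c l) v‖ := h2
        _ ≤ (if t then ρ else γ) *
            ((Real.sqrt (γ ^ 2 + ρ ^ 2) * (l.map fun t => if t then ρ else γ).prod) * ‖v‖) :=
            mul_le_mul_of_nonneg_left h3 hcnn
        _ = (Real.sqrt (γ ^ 2 + ρ ^ 2) *
            ((t :: l).map fun t => if t then ρ else γ).prod) * ‖v‖ := by
            rw [List.map_cons, List.prod_cons]; ring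

end AuxCor412

private lemma comb (m : ℕ) (hm : 2 ≤ m) (ρ γ : ℝ) (hρ : 0 ≤ ρ) (hγ : 0 ≤ γ) :
    ∑ S ∈ univ.filter (fun S : Finset (Fin m) => S ≠ ∅), ρ ^ S.card * γ ^ (m - S.card)
      ≤ (m : ℝ) * (ρ * γ ^ (m - 1)) +
        (m.choose 2 : ℝ) * (ρ ^ 2 * (ρ + γ) ^ (m - 2)) := by
  set x : Finset (Fin m) → ℝ := fun S => ρ ^ S.card * γ ^ (m - S.card) with hx
  have hxnn : ∀ S, 0 ≤ x S := fun S => by positivity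
  have hsplit : univ.filter (fun S : Finset (Fin m) => S ≠ ∅)
      = univ.filter (fun S => S.card = 1) ∪ univ.filter (fun S => 2 ≤ S.card) := by
    ext S
    simp only [mem_filter, mem_union, mem_univ, true_and, ← Finset.nonempty_iff_ne_empty,
      ← Finset.card_pos]
    omega
  have hdisj : Disjoint (univ.filter (fun S : Finset (Fin m) => S.card = 1))
      (univ.filter (fun S => 2 ≤ S.card)) := by
    rw [Finset.disjoint_left]
    intro S h1 h2
    simp only [mem_filter] at h1 h2
    omega
  rw [hsplit, Finset.sum_union hdisj]
  have hA : ∑ S ∈ univ.filter (fun S : Finset (Fin m) => S.card = 1), x S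
      = (m : ℝ) * (ρ * γ ^ (m - 1)) := by
    have h1 : univ.filter (fun S : Finset (Fin m) => S.card = 1)
        = Finset.powersetCard 1 (univ : Finset (Fin m)) := by
      ext S; simp [Finset.mem_powersetCard_univ]
    rw [h1]
    rw [Finset.sum_congr rfl (fun S hS => ?_)]
    · rw [Finset.sum_const, Finset.card_powersetCard, Finset.card_univ, Fintype.card_fin,
        Nat.choose_one_right, nsmul_eq_mul]
    · rw [Finset.mem_powersetCard_univ] at hS
      show x S = ρ * γ ^ (m - 1)
      rw [hx]; simp [hS]
  rw [hA]
  refine add_le_add le_rfl ?_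
  set P2 := Finset.powersetCard 2 (univ : Finset (Fin m)) with hP2
  have hinner : ∀ T ∈ P2, ∑ S ∈ univ.filter (fun S : Finset (Fin m) => T ⊆ S), x S
      = ρ ^ 2 * (ρ + γ) ^ (m - 2) := by
    intro T hT
    rw [Finset.mem_powersetCard_univ] at hT
    have hTc : Tᶜ.card = m - 2 := by
      rw [Finset.card_compl, hT, Fintype.card_fin]
    have step : ∑ S ∈ univ.filter (fun S : Finset (Fin m) => T ⊆ S), x S
        = ∑ R ∈ Tᶜ.powerset, ρ ^ 2 * (ρ ^ R.card * γ ^ (Tᶜ.card - R.card)) := by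
      refine Finset.sum_nbij' (fun S => S \ T) (fun R => R ∪ T) ?_ ?_ ?_ ?_ ?_
      · intro S hS
        rw [Finset.mem_filter] at hS
        rw [Finset.mem_powerset]
        intro i hi
        rw [Finset.mem_sdiff] at hi
        simpa using hi.2
      · intro R hR
        rw [Finset.mem_filter]
        exact ⟨Finset.mem_univ _, Finset.subset_union_right⟩
      · intro S hS
        rw [Finset.mem_filter] at hS
        exact Finset.sdiff_union_of_subset hS.2
      · intro R hR
        rw [Finset.mem_powerset] at hR
        refine Finset.union_sdiff_cancel_right ?_
        rw [Finset.disjoint_right]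
        intro i hiT hiR
        have := hR hiR
        simp at this
        exact this hiT
      · intro S hS
        rw [Finset.mem_filter] at hS
        have hcard : (S \ T).card + T.card = S.card :=
          Finset.card_sdiff_add_card_eq_card hS.2
        have hSle : S.card ≤ m := by
          simpa using Finset.card_le_card (Finset.subset_univ S)
        have h1 : S.card = (S \ T).card + 2 := by omega
        have h2 : m - S.card = Tᶜ.card - (S \ T).card := by omega
        show ρ ^ S.card * γ ^ (m - S.card) = _
        rw [h2, h1, pow_add]
        ring
    rw [step, ← Finset.mul_sum]
    congr 1
    have hpa := Finset.prod_add (fun _ : Fin m => ρ) (fun _ => γ) Tᶜ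
    simp only [Finset.prod_const] at hpa
    rw [← hTc, hpa]
    refine Finset.sum_congr rfl fun R hR => ?_
    rw [Finset.mem_powerset] at hR
    rw [Finset.card_sdiff_of_subset hR]
  have hmult : ∑ S ∈ univ.filter (fun S : Finset (Fin m) => 2 ≤ S.card), x S
      ≤ ∑ T ∈ P2, ∑ S ∈ univ.filter (fun S => T ⊆ S), x S := by
    have hrhs : ∑ T ∈ P2, ∑ S ∈ univ.filter (fun S : Finset (Fin m) => T ⊆ S), x S
        = ∑ S : Finset (Fin m), (S.card.choose 2 : ℝ) * x S := by
      simp_rw [Finset.sum_filter]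
      rw [Finset.sum_comm]
      refine Finset.sum_congr rfl fun S _ => ?_
      rw [← Finset.sum_filter]
      have hfe : P2.filter (fun T => T ⊆ S) = S.powersetCard 2 := by
        ext T
        simp only [hP2, Finset.mem_filter, Finset.mem_powersetCard,
          Finset.mem_powersetCard_univ]
        constructor
        · rintro ⟨⟨-, h2⟩, hTS⟩; exact ⟨hTS, h2⟩
        · rintro ⟨hTS, h2⟩; exact ⟨⟨Finset.subset_univ T, h2⟩, hTS⟩
      rw [hfe, Finset.sum_const, Finset.card_powersetCard, nsmul_eq_mul]
    rw [hrhs, Finset.sum_filter]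
    refine Finset.sum_le_sum fun S _ => ?_
    split
    · next h =>
        refine le_mul_of_one_le_left (hxnn S) ?_
        exact_mod_cast Nat.one_le_iff_ne_zero.mpr (Nat.choose_pos h).ne'
    · positivity
  calc ∑ S ∈ univ.filter (fun S : Finset (Fin m) => 2 ≤ S.card), x S
      ≤ ∑ T ∈ P2, ∑ S ∈ univ.filter (fun S => T ⊆ S), x S := hmult
    _ = ∑ T ∈ P2, (ρ ^ 2 * (ρ + γ) ^ (m - 2)) := Finset.sum_congr rfl hinner
    _ = (m.choose 2 : ℝ) * (ρ ^ 2 * (ρ + γ) ^ (m - 2)) := by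
        rw [Finset.sum_const, hP2, Finset.card_powersetCard, Finset.card_univ,
          Fintype.card_fin, nsmul_eq_mul]

private lemma sum_fun_to_finset {m : ℕ} (F : Finset (Fin m) → ℝ) :
    ∑ d : Fin m → Bool, F (univ.filter fun i => d i = true) = ∑ S : Finset (Fin m), F S := by
  refine Finset.sum_nbij' (fun d => univ.filter fun i => d i = true)
    (fun S => fun i => decide (i ∈ S)) (fun _ _ => Finset.mem_univ _)
    (fun _ _ => Finset.mem_univ _) ?_ ?_ (fun _ _ => rfl)
  · intro d _
    funext i
    by_cases h : d i = true <;> simp [h]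
  · intro S _
    ext i
    simp

/-- **Corollary 4.12.** For continuous linear operators `L, U` on a complex normed
space with `L ^ N = 0 = U ^ N` (`N ≥ 3`), under the conclusions of Lemma 4.10 and
with `0 ≤ ρ ≤ ρ₀ ≤ γ`,
`‖(L+U)^N v‖ ≤ (2√2 γ^(N-1) (N-1) ρ + √2 (N-1)(N-2) γ (γ+ρ₀)^(N-3) ρ²) ‖v‖`;
in particular if `ρ` is small relative to `γ` and `N` then `𝓣^N` is a contraction. -/
theorem norm_add_pow_apply_le_of_rho_small {X : Type*} [NormedAddCommGroup X]
    [NormedSpace ℂ X] (L U : X →L[ℂ] X) (N : ℕ) (hN : 3 ≤ N)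
    (hLN : L ^ N = 0) (hUN : U ^ N = 0) (ρ γ ρ₀ : ℝ)
    (hρ : 0 ≤ ρ) (hρρ₀ : ρ ≤ ρ₀) (hρ₀γ : ρ₀ ≤ γ)
    (hLU : ∀ v : X, ‖L (U v)‖ ≤ ρ * ‖U v‖)
    (hUL : ∀ v : X, ‖U (L v)‖ ≤ ρ * ‖L v‖)
    (hLL : ∀ v : X, ‖L (L v)‖ ≤ γ * ‖L v‖)
    (hUU : ∀ v : X, ‖U (U v)‖ ≤ γ * ‖U v‖)
    (hL : ∀ v : X, ‖L v‖ ≤ Real.sqrt (γ ^ 2 + ρ ^ 2) * ‖v‖)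
    (hU : ∀ v : X, ‖U v‖ ≤ Real.sqrt (γ ^ 2 + ρ ^ 2) * ‖v‖)
    (v : X) :
    ‖((L + U) ^ N) v‖ ≤
      (2 * Real.sqrt 2 * γ ^ (N - 1) * ((N : ℝ) - 1) * ρ +
        Real.sqrt 2 * ((N : ℝ) - 1) * ((N : ℝ) - 2) * γ * (γ + ρ₀) ^ (N - 3) * ρ ^ 2)
        * ‖v‖ := by
  obtain ⟨n, rfl⟩ : ∃ n, N = n + 3 := ⟨N - 3, by omega⟩
  have hγ : 0 ≤ γ := le_trans hρ (le_trans hρρ₀ hρ₀γ)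
  have hργ : ρ ≤ γ := le_trans hρρ₀ hρ₀γ
  set s := Real.sqrt (γ ^ 2 + ρ ^ 2) with hsdef
  have hs0 : 0 ≤ s := Real.sqrt_nonneg _
  have hs : s ≤ Real.sqrt 2 * γ := by
    have h2γ : Real.sqrt 2 * γ = Real.sqrt (2 * γ ^ 2) := by
      rw [Real.sqrt_mul (by norm_num), Real.sqrt_sq hγ]
    rw [h2γ]
    apply Real.sqrt_le_sqrt
    nlinarith
  set m := n + 2 with hm
  -- per-term bound
  set x : Finset (Fin m) → ℝ := fun S => ρ ^ S.card * γ ^ (m - S.card) with hxdef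
  have hterm : ∀ (b : Bool) (d : Fin m → Bool),
      ‖applyWord L U (decode b (List.ofFn d)) v‖ ≤
        (if (univ.filter fun i => d i = true) = ∅ then 0
          else s * x (univ.filter fun i => d i = true) * ‖v‖) := by
    intro b d
    by_cases hd : (univ.filter fun i => d i = true) = ∅
    · rw [if_pos hd]
      have hdf : d = fun _ => false := by
        funext i
        by_contra h
        have hi : d i = true := by cases hdi : d i with
          | true => rfl
          | false => exact absurd hdi h
        have : i ∈ (univ.filter fun i => d i = true) := by simp [hi]
        rw [hd] at this
        exact absurd this (Finset.notMem_empty i)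
      have hof : List.ofFn d = List.replicate m false := by
        rw [hdf]
        exact List.ofFn_const m false
      rw [hof, decode_replicate, applyWord_replicate]
      cases b
      · show ‖(U ^ (m + 1)) v‖ ≤ 0
        rw [show m + 1 = n + 3 from rfl, hUN]
        simp
      · show ‖(L ^ (m + 1)) v‖ ≤ 0
        rw [show m + 1 = n + 3 from rfl, hLN]
        simp
    · rw [if_neg hd]
      have hw := word_bound L U ρ γ hρ hγ hLU hUL hLL hUU hL hU (List.ofFn d) b v
      have hprod : ((List.ofFn d).map fun t => if t then ρ else γ).prod
          = x (univ.filter fun i => d i = true) := by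
        rw [List.map_ofFn, List.prod_ofFn]
        have : ∀ i, ((fun t => if t then ρ else γ) ∘ d) i = if d i = true then ρ else γ :=
          fun i => rfl
        simp only [this]
        rw [Finset.prod_ite (fun _ => ρ) (fun _ => γ), Finset.prod_const, Finset.prod_const]
        rw [hxdef]
        congr 1
        rw [Finset.filter_not, Finset.card_sdiff_of_subset (Finset.filter_subset _ _), Finset.card_univ,
          Fintype.card_fin]
      rw [hprod] at hw
      exact hw
  have hexp := expand L U m v
  calc ‖((L + U) ^ (n + 3)) v‖
      = ‖∑ b : Bool, ∑ d : Fin m → Bool, applyWord L U (decode b (List.ofFn d)) v‖ := by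
        rw [show n + 3 = m + 1 from rfl, hexp]
    _ ≤ ∑ b : Bool, ∑ d : Fin m → Bool, ‖applyWord L U (decode b (List.ofFn d)) v‖ :=
        (norm_sum_le _ _).trans (Finset.sum_le_sum fun b _ => norm_sum_le _ _)
    _ ≤ ∑ _b : Bool, ∑ d : Fin m → Bool,
          (if (univ.filter fun i => d i = true) = ∅ then 0
            else s * x (univ.filter fun i => d i = true) * ‖v‖) :=
        Finset.sum_le_sum fun b _ => Finset.sum_le_sum fun d _ => hterm b d
    _ = 2 * ∑ S : Finset (Fin m), (if S = ∅ then 0 else s * x S * ‖v‖) := by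
        rw [Fintype.sum_bool,
          sum_fun_to_finset (fun S => if S = ∅ then 0 else s * x S * ‖v‖)]
        ring
    _ = 2 * (s * ‖v‖ * ∑ S ∈ univ.filter (fun S : Finset (Fin m) => S ≠ ∅), x S) := by
        congr 1
        rw [Finset.mul_sum]
        rw [Finset.sum_filter]
        refine Finset.sum_congr rfl fun S _ => ?_
        by_cases h : S = ∅ <;> simp [h] <;> ring
    _ ≤ 2 * (s * ‖v‖ * ((m : ℝ) * (ρ * γ ^ (m - 1)) +
          (m.choose 2 : ℝ) * (ρ ^ 2 * (ρ + γ) ^ (m - 2)))) := by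
        have hc := comb m (by omega) ρ γ hρ hγ
        have hsv : 0 ≤ s * ‖v‖ := mul_nonneg hs0 (norm_nonneg v)
        have hsum : ∀ S ∈ univ.filter (fun S : Finset (Fin m) => S ≠ ∅), 0 ≤ x S :=
          fun S _ => by positivity
        nlinarith [Finset.sum_le_sum hsum]
    _ ≤ (2 * Real.sqrt 2 * γ ^ (n + 3 - 1) * ((↑(n + 3) : ℝ) - 1) * ρ +
          Real.sqrt 2 * ((↑(n + 3) : ℝ) - 1) * ((↑(n + 3) : ℝ) - 2) * γ *
            (γ + ρ₀) ^ (n + 3 - 3) * ρ ^ 2) * ‖v‖ := by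
        have hch : ((n+2).choose 2 : ℝ) = ((n : ℝ) + 2) * ((n : ℝ) + 1) / 2 := by
          have hnat : ((n+2).choose 2) * 2 = (n+2) * (n+1) := by
            rw [Nat.choose_two_right]
            rw [show n + 2 - 1 = n + 1 from rfl]
            rw [Nat.div_mul_cancel]
            rw [mul_comm]
            exact (Nat.even_mul_succ_self (n+1)).two_dvd
          have := congrArg (Nat.cast : ℕ → ℝ) hnat
          push_cast at this
          linarith
        have hpow : (ρ + γ) ^ n ≤ (γ + ρ₀) ^ n :=
          pow_le_pow_left₀ (by positivity) (by linarith) _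
        simp only [hm]
        rw [show n + 3 - 1 = n + 2 from rfl, show n + 3 - 3 = n from rfl,
          show n + 2 - 1 = n + 1 from rfl, show n + 2 - 2 = n from rfl]
        push_cast
        have hA : 0 ≤ ((n : ℝ) + 2) * (ρ * γ ^ (n + 1)) := by positivity
        have hB : 0 ≤ ((n+2).choose 2 : ℝ) * (ρ ^ 2 * (ρ + γ) ^ n) := by positivity
        have key : 2 * (s * (((n : ℝ) + 2) * (ρ * γ ^ (n + 1)) +
            ((n+2).choose 2 : ℝ) * (ρ ^ 2 * (ρ + γ) ^ n)))
            ≤ 2 * Real.sqrt 2 * γ ^ (n + 2) * ((n : ℝ) + 2) * ρ +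
              Real.sqrt 2 * ((n : ℝ) + 2) * ((n : ℝ) + 1) * γ * (γ + ρ₀) ^ n * ρ ^ 2 := by
          have step1 : s * (((n : ℝ) + 2) * (ρ * γ ^ (n + 1)) +
              ((n+2).choose 2 : ℝ) * (ρ ^ 2 * (ρ + γ) ^ n))
              ≤ (Real.sqrt 2 * γ) * (((n : ℝ) + 2) * (ρ * γ ^ (n + 1)) +
              ((n+2).choose 2 : ℝ) * (ρ ^ 2 * (γ + ρ₀) ^ n)) := by
            refine mul_le_mul hs (add_le_add le_rfl ?_) (by positivity) (by positivity)
            exact mul_le_mul_of_nonneg_left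
              (mul_le_mul_of_nonneg_left hpow (sq_nonneg ρ)) (by positivity)
          have heq : 2 * ((Real.sqrt 2 * γ) * (((n : ℝ) + 2) * (ρ * γ ^ (n + 1)) +
              ((n+2).choose 2 : ℝ) * (ρ ^ 2 * (γ + ρ₀) ^ n)))
              = 2 * Real.sqrt 2 * γ ^ (n + 2) * ((n : ℝ) + 2) * ρ +
                Real.sqrt 2 * ((n : ℝ) + 2) * ((n : ℝ) + 1) * γ * (γ + ρ₀) ^ n * ρ ^ 2 := by
            rw [hch, pow_succ]
            ring
          linarith
        have hfin := mul_le_mul_of_nonneg_right key (norm_nonneg v)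
        nlinarith [hfin]
end

section
/- Let X be a normed vector space over ℂ, let L, U : X → X be continuous linear operators, let N ≥ 2 be an integer with L^N = 0 and U^N = 0 (N-fold composition), and let ρ, γ ≥ 0 be reals such that for all v ∈ X: ‖L(Uv)‖ ≤ ρ‖Uv‖, ‖U(Lv)‖ ≤ ρ‖Lv‖, ‖L(Lv)‖ ≤ γ‖Lv‖, ‖U(Uv)‖ ≤ γ‖Uv‖, ‖Lv‖ ≤ √(γ²+ρ²)‖v‖ and ‖Uv‖ ≤ √(γ²+ρ²)‖v‖. Then for every integer s ≥ 1 and every v ∈ X: ‖(L + U)^{sN} v‖ ≤ 2·√(γ²+ρ²)·(∑_{j=s}^{sN−1} C(sN−1, j)·γ^{sN−1−j}·ρ^j)·‖v‖, where C denotes the binomial coefficient. -/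
/-!
Expand `(L + U) ^ (m + 1)` into words in `L` and `U` and group them by their first letter and
their number `j` of letter changes. A group with `(j + 1) * N ≤ m + 1` vanishes, since each of
its words has a run of length at least `N`; for `m + 1 = s * N` only `j ≥ s` survives. Applied
to `v`, a group is bounded by `C(m, j) γ^(m-j) ρ^j √(γ² + ρ²) ‖v‖`: splitting off the first run,
each repeated letter costs `γ`, each change `ρ` and the first letter `√(γ² + ρ²)`, and the
hockey-stick identity collects the binomial coefficients. The two first letters give the `2`.
-/

open Finset

theorem Nat.sum_range_choose_eq_choose_succ (m j : ℕ) :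
    ∑ r ∈ range m, r.choose j = m.choose (j + 1) := by
  induction m with
  | zero => simp
  | succ m ih => rw [sum_range_succ, ih, Nat.choose_succ_succ', add_comm]

theorem sum_range_pow_mul_choose_mul_pow {S : Type*} [CommSemiring S] (γ : S) (m j : ℕ) :
    ∑ r ∈ range m, γ ^ (m - 1 - r) * (r.choose j * γ ^ (r - j)) =
      m.choose (j + 1) * γ ^ (m - (j + 1)) := by
  have hterm : ∀ r ∈ range m,
      γ ^ (m - 1 - r) * (r.choose j * γ ^ (r - j)) = r.choose j * γ ^ (m - (j + 1)) := by
    intro r hr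
    rcases lt_or_ge r j with hrj | hjr
    · simp [Nat.choose_eq_zero_of_lt hrj]
    · rw [mul_left_comm, ← pow_add]
      congr 2
      have := mem_range.mp hr
      omega
  rw [sum_congr rfl hterm, ← sum_mul, ← Nat.cast_sum, Nat.sum_range_choose_eq_choose_succ]

theorem mul_add_pow_eq_pow_succ_add_sum {R : Type*} [Semiring R] (x y : R) (m : ℕ) :
    x * (x + y) ^ m = x ^ (m + 1) + ∑ r ∈ range m, x ^ (m - r) * (y * (x + y) ^ r) := by
  induction m with
  | zero => simp
  | succ m ih =>
    have hshift : ∀ r ∈ range m, x * (x ^ (m - r) * (y * (x + y) ^ r)) =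
        x ^ (m + 1 - r) * (y * (x + y) ^ r) := by
      intro r hr
      rw [← mul_assoc, ← pow_succ', Nat.sub_add_comm (mem_range.mp hr).le]
    rw [pow_succ' (x + y), ← mul_assoc, mul_add, add_mul, mul_assoc, ih, mul_add, mul_sum,
      sum_congr rfl hshift, sum_range_succ, Nat.add_sub_cancel_left, pow_one, ← pow_succ',
      mul_assoc]
    abel

section Words

variable {R : Type*} [Semiring R] (A : Bool → R)

/-- `runWordSum A a m j` is the sum of all words of length `m + 1` in the letters `A true`,
`A false` that begin with `A a` and change letter exactly `j` times; the recursion splits off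
the first run, of length `m - r`. -/
def runWordSum : Bool → ℕ → ℕ → R
  | a, m, 0 => A a ^ (m + 1)
  | a, m, j + 1 => ∑ r ∈ range m, A a ^ (m - r) * runWordSum (!a) r j

theorem dvd_runWordSum (a : Bool) (m j : ℕ) : A a ∣ runWordSum A a m j := by
  cases j with
  | zero => exact dvd_pow_self _ m.succ_ne_zero
  | succ j =>
    exact dvd_sum fun r hr =>
      (dvd_pow_self _ (Nat.sub_ne_zero_of_lt (mem_range.mp hr))).mul_right _

theorem sum_range_runWordSum (a : Bool) (m K : ℕ) (hK : m < K) :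
    ∑ j ∈ range K, runWordSum A a m j = A a * (∑ b, A b) ^ m := by
  induction m using Nat.strong_induction_on generalizing a K with
  | _ m ih =>
    obtain ⟨K, rfl⟩ : ∃ K', K = K' + 1 := Nat.exists_eq_add_one.mpr (by omega)
    have htail : ∀ r ∈ range m,
        ∑ j ∈ range K, runWordSum A (!a) r j = A (!a) * (∑ b, A b) ^ r :=
      fun r hr => ih r (mem_range.mp hr) (!a) K (by have := mem_range.mp hr; omega)
    have hpair : ∑ b, A b = A a + A (!a) := by cases a <;> simp [add_comm]
    simp only [sum_range_succ', runWordSum]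
    rw [sum_comm]
    simp_rw [← mul_sum]
    rw [sum_congr rfl fun r hr => by rw [htail r hr], hpair, mul_add_pow_eq_pow_succ_add_sum,
      add_comm]

theorem runWordSum_eq_zero {N : ℕ} (hA : ∀ a, A a ^ N = 0) (a : Bool) (m j : ℕ)
    (hlen : (j + 1) * N ≤ m + 1) : runWordSum A a m j = 0 := by
  induction j generalizing a m with
  | zero => exact pow_eq_zero_of_le (by simpa using hlen) (hA a)
  | succ j ih =>
    refine sum_eq_zero fun r hr => ?_
    -- either the first run is already long enough, or the remaining `j + 1` runs are too long
    by_cases hrun : N ≤ m - r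
    · rw [pow_eq_zero_of_le hrun (hA a), zero_mul]
    · have := mem_range.mp hr
      rw [ih (!a) r (by rw [add_mul] at hlen; omega), mul_zero]

theorem sum_pow_succ_eq_sum_Icc_runWordSum {N : ℕ} (hN : 0 < N) (hA : ∀ a, A a ^ N = 0)
    {s m : ℕ} (hs : s * N ≤ m + 1) :
    (∑ b, A b) ^ (m + 1) = ∑ a, ∑ j ∈ Icc s m, runWordSum A a m j := by
  have hsm : s ≤ m + 1 := (Nat.le_mul_of_pos_right s hN).trans hs
  have hshort : ∀ a, ∑ j ∈ range s, runWordSum A a m j = 0 := fun a =>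
    sum_eq_zero fun j hj => runWordSum_eq_zero A hA a m j
      (le_trans (Nat.mul_le_mul_right N (mem_range.mp hj)) hs)
  rw [pow_succ', sum_mul]
  refine sum_congr rfl fun a _ => ?_
  rw [← sum_range_runWordSum A a m (m + 1) m.lt_succ_self, range_eq_Ico,
    ← sum_Ico_consecutive _ (Nat.zero_le s) hsm, ← range_eq_Ico, hshort, zero_add,
    Ico_add_one_right_eq_Icc]

end Words

section Norms

variable {𝕜 X : Type*} [Semiring 𝕜] [SeminormedAddCommGroup X] [Module 𝕜 X] {γ ρ C : ℝ}

theorem norm_pow_succ_apply_le {T : X →L[𝕜] X} (hT : ∀ v, ‖T (T v)‖ ≤ γ * ‖T v‖) (hγ : 0 ≤ γ)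
    (k : ℕ) (v : X) : ‖(T ^ (k + 1)) v‖ ≤ γ ^ k * ‖T v‖ := by
  induction k with
  | zero => simp
  | succ k ih =>
    calc ‖(T ^ (k + 2)) v‖ = ‖T (T ((T ^ k) v))‖ := by
          rw [pow_succ', mul_apply_eq_comp, pow_succ', mul_apply_eq_comp]
      _ ≤ γ * ‖T ((T ^ k) v)‖ := hT _
      _ = γ * ‖(T ^ (k + 1)) v‖ := by rw [pow_succ', mul_apply_eq_comp]
      _ ≤ γ * (γ ^ k * ‖T v‖) := by gcongr
      _ = γ ^ (k + 1) * ‖T v‖ := by ring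

theorem norm_runWordSum_apply_le (A : Bool → X →L[𝕜] X) (hγ : 0 ≤ γ) (hρ : 0 ≤ ρ)
    (hsame : ∀ a v, ‖A a (A a v)‖ ≤ γ * ‖A a v‖)
    (hswitch : ∀ a v, ‖A a (A (!a) v)‖ ≤ ρ * ‖A (!a) v‖)
    (hbound : ∀ a v, ‖A a v‖ ≤ C * ‖v‖) (a : Bool) (m j : ℕ) (v : X) :
    ‖runWordSum A a m j v‖ ≤ m.choose j * γ ^ (m - j) * ρ ^ j * (C * ‖v‖) := by
  induction j generalizing a m with
  | zero =>
    rw [runWordSum, Nat.choose_zero_right, Nat.sub_zero, pow_zero, Nat.cast_one, one_mul, mul_one]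
    exact (norm_pow_succ_apply_le (hsame a) hγ m v).trans (by gcongr; exact hbound a v)
  | succ j ih =>
    have hterm : ∀ r ∈ range m, ‖(A a ^ (m - r) * runWordSum A (!a) r j) v‖ ≤
        γ ^ (m - 1 - r) * (r.choose j * γ ^ (r - j)) * (ρ ^ (j + 1) * (C * ‖v‖)) := by
      intro r hr
      obtain ⟨T, hT⟩ := dvd_runWordSum A (!a) r j
      have hk : m - r = m - 1 - r + 1 := by have := mem_range.mp hr; omega
      have hW : runWordSum A (!a) r j v = A (!a) (T v) := by rw [hT, mul_apply_eq_comp]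
      calc ‖(A a ^ (m - r) * runWordSum A (!a) r j) v‖
          = ‖(A a ^ (m - 1 - r + 1)) (A (!a) (T v))‖ := by rw [mul_apply_eq_comp, hW, hk]
        _ ≤ γ ^ (m - 1 - r) * (ρ * ‖runWordSum A (!a) r j v‖) := by
          rw [hW]
          exact (norm_pow_succ_apply_le (hsame a) hγ _ _).trans (by gcongr; exact hswitch a _)
        _ ≤ γ ^ (m - 1 - r) * (ρ * (r.choose j * γ ^ (r - j) * ρ ^ j * (C * ‖v‖))) := by
          gcongr; exact ih (!a) r
        _ = _ := by ring
    calc ‖runWordSum A a m (j + 1) v‖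
        ≤ ∑ r ∈ range m, ‖(A a ^ (m - r) * runWordSum A (!a) r j) v‖ := by
          rw [runWordSum, _root_.sum_apply]; exact norm_sum_le _ _
      _ ≤ _ := sum_le_sum hterm
      _ = _ := by
        rw [← sum_mul, sum_range_pow_mul_choose_mul_pow]; ring

end Norms

/-- **Corollary 4.13 (higher-order-in-ρ estimate for `𝓣^{sN}`).** For continuous
linear operators `L, U` on a complex normed space with `L ^ N = 0 = U ^ N` (`N ≥ 2`),
under the conclusions of Lemma 4.10, for every `s ≥ 1`,
`‖(L+U)^{sN} v‖ ≤ 2 √(γ²+ρ²) (∑_{j=s}^{sN-1} C(sN-1, j) γ^(sN-1-j) ρ^j) ‖v‖`. -/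
theorem norm_add_pow_mul_apply_le {X : Type*} [NormedAddCommGroup X]
    [NormedSpace ℂ X] (L U : X →L[ℂ] X) (N : ℕ) (hN : 2 ≤ N)
    (hLN : L ^ N = 0) (hUN : U ^ N = 0) (ρ γ : ℝ) (hρ : 0 ≤ ρ) (hγ : 0 ≤ γ)
    (hLU : ∀ v : X, ‖L (U v)‖ ≤ ρ * ‖U v‖)
    (hUL : ∀ v : X, ‖U (L v)‖ ≤ ρ * ‖L v‖)
    (hLL : ∀ v : X, ‖L (L v)‖ ≤ γ * ‖L v‖)
    (hUU : ∀ v : X, ‖U (U v)‖ ≤ γ * ‖U v‖)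
    (hL : ∀ v : X, ‖L v‖ ≤ Real.sqrt (γ ^ 2 + ρ ^ 2) * ‖v‖)
    (hU : ∀ v : X, ‖U v‖ ≤ Real.sqrt (γ ^ 2 + ρ ^ 2) * ‖v‖)
    (s : ℕ) (hs : 1 ≤ s) (v : X) :
    ‖((L + U) ^ (s * N)) v‖ ≤
      2 * Real.sqrt (γ ^ 2 + ρ ^ 2) *
        (∑ j ∈ Finset.Icc s (s * N - 1),
          ((s * N - 1).choose j : ℝ) * γ ^ (s * N - 1 - j) * ρ ^ j) * ‖v‖ := by
  set A : Bool → X →L[ℂ] X := fun b => cond b L U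
  have hsum : ∑ b, A b = L + U := by simp [A]
  have hA : ∀ a, A a ^ N = 0 := by simp [A, Bool.forall_bool, hLN, hUN]
  have hsame : ∀ a v, ‖A a (A a v)‖ ≤ γ * ‖A a v‖ := by simp [A, Bool.forall_bool, hLL, hUU]
  have hswitch : ∀ a v, ‖A a (A (!a) v)‖ ≤ ρ * ‖A (!a) v‖ := by
    simp [A, Bool.forall_bool, hLU, hUL]
  have hbound : ∀ a v, ‖A a v‖ ≤ Real.sqrt (γ ^ 2 + ρ ^ 2) * ‖v‖ := by
    simp [A, Bool.forall_bool, hL, hU]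
  obtain ⟨m, hm⟩ : ∃ m, s * N = m + 1 := Nat.exists_eq_add_one.mpr (Nat.mul_pos hs (by omega))
  rw [hm, Nat.add_sub_cancel, ← hsum,
    sum_pow_succ_eq_sum_Icc_runWordSum A (by omega) hA hm.le, _root_.sum_apply]
  calc ‖∑ a, (∑ j ∈ Icc s m, runWordSum A a m j) v‖
      ≤ ∑ a : Bool, ∑ j ∈ Icc s m, ‖runWordSum A a m j v‖ := by
        refine (norm_sum_le _ _).trans (sum_le_sum fun a _ => ?_)
        rw [_root_.sum_apply]; exact norm_sum_le _ _
    _ ≤ ∑ a : Bool, ∑ j ∈ Icc s m,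
          m.choose j * γ ^ (m - j) * ρ ^ j * (Real.sqrt (γ ^ 2 + ρ ^ 2) * ‖v‖) := by
        gcongr with a _ j
        exact norm_runWordSum_apply_le A hγ hρ hsame hswitch hbound a m j v
    _ = _ := by
        rw [Fintype.sum_bool, ← two_mul, ← sum_mul]; ring
end

section
/- Let k > 0 and a < b be real numbers and g ∈ ℂ. Suppose v : ℝ → ℂ is twice differentiable on an open interval containing [a, b], satisfies v''(x) + k²·v(x) = 0 for all x ∈ [a, b], together with the impedance boundary conditions −v'(a) − i·k·v(a) = g and v'(b) − i·k·v(b) = 0 (where i is the imaginary unit). Then v(x) = (i·g/(2k))·exp(i·k·(x − a)) for all x ∈ [a, b]. -/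
open Complex

lemma helm_aux_const (a b : ℝ) (f f' : ℝ → ℂ)
    (hd : ∀ x ∈ Set.Icc a b, HasDerivAt f (f' x) x)
    (h0 : ∀ x ∈ Set.Icc a b, f' x = 0) :
    ∀ x ∈ Set.Icc a b, f x = f a := by
  apply constant_of_has_deriv_right_zero
  · exact fun x hx => (hd x hx).continuousAt.continuousWithinAt
  · intro x hx
    have hx' : x ∈ Set.Icc a b := Set.mem_Icc_of_Ico hx
    have := (hd x hx').hasDerivWithinAt (s := Set.Ici x)
    rwa [h0 x hx'] at this

lemma helm_aux_exp (c : ℂ) (x : ℝ) :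
    HasDerivAt (fun t : ℝ => Complex.exp (c * t)) (c * Complex.exp (c * x)) x := by
  have h : HasDerivAt (fun z : ℂ => Complex.exp (c * z)) (c * Complex.exp (c * x)) (x : ℂ) := by
    simpa [mul_comm] using ((hasDerivAt_id (x : ℂ)).const_mul c).cexp
  exact h.comp_ofReal

/-- **Explicit solution formula (4.7) for the 1-d local Helmholtz impedance problem**
(proof of Lemma 4.2). If `v` is twice differentiable (with first derivative `v'` and
second derivative `v''`) at every point of `[a,b]`, satisfies `v'' + k² v = 0` on
`[a,b]` together with the impedance boundary conditions `−v'(a) − i k v(a) = g` and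
`v'(b) − i k v(b) = 0`, then `v(x) = (i g/(2k)) exp(i k (x − a))` on `[a,b]`. -/
theorem helmholtz_1d_impedance_solution (k a b : ℝ) (hk : 0 < k) (hab : a < b)
    (g : ℂ) (v v' v'' : ℝ → ℂ)
    (hd1 : ∀ x ∈ Set.Icc a b, HasDerivAt v (v' x) x)
    (hd2 : ∀ x ∈ Set.Icc a b, HasDerivAt v' (v'' x) x)
    (hode : ∀ x ∈ Set.Icc a b, v'' x + (k : ℂ) ^ 2 * v x = 0)
    (hbca : -v' a - Complex.I * k * v a = g)
    (hbcb : v' b - Complex.I * k * v b = 0) :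
    ∀ x ∈ Set.Icc a b,
      v x = (Complex.I * g / (2 * k)) * Complex.exp (Complex.I * k * (x - a)) := by
  have hk0 : (k : ℂ) ≠ 0 := Complex.ofReal_ne_zero.2 hk.ne'
  set c : ℂ := Complex.I * k with hc
  have hc2 : c ^ 2 = -((k : ℂ) ^ 2) := by
    rw [hc]; ring_nf; rw [Complex.I_sq]; ring
  have hab' : a ∈ Set.Icc a b := Set.left_mem_Icc.2 hab.le
  have hbb : b ∈ Set.Icc a b := Set.right_mem_Icc.2 hab.le
  -- w = v' - c v satisfies (w e^{cx})' = 0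
  set w : ℝ → ℂ := fun x => v' x - c * v x with hw
  have hu : ∀ x ∈ Set.Icc a b, w x * Complex.exp (c * x) = w a * Complex.exp (c * a) := by
    apply helm_aux_const a b _ (fun x => (v'' x - c * v' x) * Complex.exp (c * x)
      + w x * (c * Complex.exp (c * x)))
    · intro x hx
      exact (((hd2 x hx).sub ((hd1 x hx).const_mul c)).mul (helm_aux_exp c x))
    · intro x hx
      have hvx : v'' x = -((k : ℂ) ^ 2 * v x) := by linear_combination hode x hx
      simp only [hw, hvx]
      linear_combination (-(Complex.exp (c * x) * v x)) * hc2
  have hwb : w b = 0 := by simpa [hw, hc] using hbcb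
  have hwa0 : w a * Complex.exp (c * a) = 0 := by
    have h := hu b hbb
    rw [hwb] at h
    simpa using h.symm
  have hw0 : ∀ x ∈ Set.Icc a b, w x = 0 := by
    intro x hx
    have h := hu x hx
    rw [hwa0] at h
    exact (mul_eq_zero.1 h).resolve_right (Complex.exp_ne_zero _)
  -- v' = c v on [a,b], so v x e^{-cx} is constant
  have hp : ∀ x ∈ Set.Icc a b, v x * Complex.exp (-c * x) = v a * Complex.exp (-c * a) := by
    apply helm_aux_const a b _ (fun x => v' x * Complex.exp (-c * x)
      + v x * (-c * Complex.exp (-c * x)))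
    · intro x hx
      exact (hd1 x hx).mul (helm_aux_exp (-c) x)
    · intro x hx
      have hv' : v' x = c * v x := sub_eq_zero.1 (hw0 x hx)
      rw [hv']; ring
  -- value at a
  have hv'a : v' a = c * v a := sub_eq_zero.1 (hw0 a hab')
  have hva : v a = Complex.I * g / (2 * k) := by
    rw [hv'a, hc] at hbca
    have h2k : (2 : ℂ) * k ≠ 0 := by simp [hk0]
    rw [eq_div_iff h2k]
    linear_combination Complex.I * hbca + 2 * (k : ℂ) * v a * Complex.I_sq
  -- conclude
  intro x hx
  have hx' := hp x hx
  have h3 : Complex.exp (-c * x) * Complex.exp (c * x) = 1 := by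
    rw [← Complex.exp_add]; simp
  have hvx : v x = v a * Complex.exp (-c * a) * Complex.exp (c * x) := by
    calc v x = v x * (Complex.exp (-c * x) * Complex.exp (c * x)) := by rw [h3]; ring
      _ = v x * Complex.exp (-c * x) * Complex.exp (c * x) := by ring
      _ = v a * Complex.exp (-c * a) * Complex.exp (c * x) := by rw [hx']
  rw [hvx, hva, mul_assoc, ← Complex.exp_add]
  congr 2
  rw [hc]; ring
end

section
/- Let k > 0 and a < b be real numbers and g ∈ ℂ. Suppose v : ℝ → ℂ is twice differentiable on an open interval containing [a, b], satisfies v''(x) + k²·v(x) = 0 for all x ∈ [a, b], together with −v'(a) − i·k·v(a) = g and v'(b) − i·k·v(b) = 0 (where i is the imaginary unit). Then for every x ∈ [a, b]: v'(x) − i·k·v(x) = 0 and −v'(x) − i·k·v(x) = g·exp(i·k·(x − a)); in particular |−v'(x) − i·k·v(x)| = |g| for all x ∈ [a, b]. -/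
open Complex Set

/-!
Writing the Helmholtz operator as `v'' + κ² v = (d/dx + iκ)(d/dx - iκ) v = (d/dx - iκ)(d/dx + iκ) v`,
the right-facing trace `w = v' - iκv` solves `w' = -iκ w` and the left-facing trace
`u = -v' - iκv` solves `u' = iκ u`. Hence `w` is a multiple of `exp (-iκx)` vanishing at `b`,
so it vanishes identically, and `u` is `u(a) exp (iκ(x - a)) = g exp (iκ(x - a))`, whose modulus
is `|g|` because `κ` is real.
-/

theorem eq_of_hasDerivAt_zero_on_Icc {E : Type*} [NormedAddCommGroup E] [NormedSpace ℝ E]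
    {a b : ℝ} {f : ℝ → E} (hf : ∀ x ∈ Icc a b, HasDerivAt f 0 x) {x y : ℝ}
    (hx : x ∈ Icc a b) (hy : y ∈ Icc a b) : f x = f y := by
  have hconst := constant_of_has_deriv_right_zero
    (fun t ht => (hf t ht).continuousAt.continuousWithinAt)
    (fun t ht => (hf t (Ico_subset_Icc_self ht)).hasDerivWithinAt)
  rw [hconst x hx, hconst y hy]

theorem eq_mul_exp_of_hasDerivAt_eq_const_mul {a b : ℝ} {c : ℂ} {w : ℝ → ℂ}
    (hw : ∀ x ∈ Icc a b, HasDerivAt w (c * w x) x) {x y : ℝ}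
    (hx : x ∈ Icc a b) (hy : y ∈ Icc a b) : w x = w y * exp (c * (x - y)) := by
  have hderiv : ∀ t ∈ Icc a b, HasDerivAt (fun s : ℝ => w s * exp (-(c * s))) 0 t := by
    intro t ht
    have hexp : HasDerivAt (fun s : ℝ => exp (-(c * s))) (-c * exp (-(c * t))) t := by
      simpa [mul_comm] using ((ofRealCLM.hasDerivAt (x := t)).const_mul c).neg.cexp
    exact ((hw t ht).mul hexp).congr_deriv (by ring)
  have hxy := eq_of_hasDerivAt_zero_on_Icc hderiv hx hy
  calc w x = w x * exp (-(c * x)) * exp (c * x) := by rw [mul_assoc, ← exp_add]; simp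
    _ = w y * exp (-(c * y)) * exp (c * x) := by rw [hxy]
    _ = w y * exp (c * (x - y)) := by rw [mul_assoc, ← exp_add, neg_add_eq_sub, ← mul_sub]

section ImpedanceTraces

variable {κ : ℂ} {v v' v'' : ℝ → ℂ} {x : ℝ}

theorem hasDerivAt_right_impedance_trace (hd1 : HasDerivAt v (v' x) x)
    (hd2 : HasDerivAt v' (v'' x) x) (hode : v'' x + κ ^ 2 * v x = 0) :
    HasDerivAt (fun t => v' t - I * κ * v t) (-(I * κ) * (v' x - I * κ * v x)) x := by
  refine (hd2.sub (hd1.const_mul (I * κ))).congr_deriv ?_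
  linear_combination hode - κ ^ 2 * v x * I_sq

theorem hasDerivAt_left_impedance_trace (hd1 : HasDerivAt v (v' x) x)
    (hd2 : HasDerivAt v' (v'' x) x) (hode : v'' x + κ ^ 2 * v x = 0) :
    HasDerivAt (fun t => -v' t - I * κ * v t) (I * κ * (-v' x - I * κ * v x)) x := by
  refine (hd2.neg.sub (hd1.const_mul (I * κ))).congr_deriv ?_
  linear_combination -hode + κ ^ 2 * v x * I_sq

end ImpedanceTraces

theorem helmholtz_1d_impedance_traces_general (k a b : ℝ)
    (g : ℂ) (v v' v'' : ℝ → ℂ)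
    (hd1 : ∀ x ∈ Set.Icc a b, HasDerivAt v (v' x) x)
    (hd2 : ∀ x ∈ Set.Icc a b, HasDerivAt v' (v'' x) x)
    (hode : ∀ x ∈ Set.Icc a b, v'' x + (k : ℂ) ^ 2 * v x = 0)
    (hbca : -v' a - Complex.I * k * v a = g)
    (hbcb : v' b - Complex.I * k * v b = 0) :
    ∀ x ∈ Set.Icc a b,
      v' x - Complex.I * k * v x = 0 ∧
      -v' x - Complex.I * k * v x = g * Complex.exp (Complex.I * k * (x - a)) ∧
      ‖-v' x - Complex.I * k * v x‖ = ‖g‖ := by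
  intro x hx
  have ha : a ∈ Icc a b := ⟨le_rfl, hx.1.trans hx.2⟩
  have hb : b ∈ Icc a b := ⟨hx.1.trans hx.2, le_rfl⟩
  have hright := eq_mul_exp_of_hasDerivAt_eq_const_mul
    (fun t ht => hasDerivAt_right_impedance_trace (hd1 t ht) (hd2 t ht) (hode t ht)) hx hb
  have hleft := eq_mul_exp_of_hasDerivAt_eq_const_mul
    (fun t ht => hasDerivAt_left_impedance_trace (hd1 t ht) (hd2 t ht) (hode t ht)) hx ha
  rw [hbcb, zero_mul] at hright
  rw [hbca] at hleft
  have hphase : I * k * ((x : ℂ) - a) = I * ((k * (x - a) : ℝ) : ℂ) := by push_cast; ring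
  refine ⟨hright, hleft, ?_⟩
  rw [hleft, norm_mul, hphase, norm_exp_I_mul_ofReal, mul_one]

/-- **Lemma 4.2 (1-d impedance-to-impedance maps).** If `v` is twice differentiable
(with first derivative `v'` and second derivative `v''`) at every point of `[a,b]`,
satisfies `v'' + k² v = 0` on `[a,b]` together with `−v'(a) − i k v(a) = g` and
`v'(b) − i k v(b) = 0`, then for every `x ∈ [a,b]` the right-facing impedance trace
`v'(x) − i k v(x)` vanishes, the left-facing impedance trace satisfies
`−v'(x) − i k v(x) = g exp(i k (x − a))`, and in particular
`|−v'(x) − i k v(x)| = |g|`. -/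
theorem helmholtz_1d_impedance_traces (k a b : ℝ) (hk : 0 < k) (hab : a < b)
    (g : ℂ) (v v' v'' : ℝ → ℂ)
    (hd1 : ∀ x ∈ Set.Icc a b, HasDerivAt v (v' x) x)
    (hd2 : ∀ x ∈ Set.Icc a b, HasDerivAt v' (v'' x) x)
    (hode : ∀ x ∈ Set.Icc a b, v'' x + (k : ℂ) ^ 2 * v x = 0)
    (hbca : -v' a - Complex.I * k * v a = g)
    (hbcb : v' b - Complex.I * k * v b = 0) :
    ∀ x ∈ Set.Icc a b,
      v' x - Complex.I * k * v x = 0 ∧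
      -v' x - Complex.I * k * v x = g * Complex.exp (Complex.I * k * (x - a)) ∧
      ‖-v' x - Complex.I * k * v x‖ = ‖g‖ :=
  helmholtz_1d_impedance_traces_general k a b g v v' v'' hd1 hd2 hode hbca hbcb
end

section
/- Let k be a real number, let a > 0 and b > 0, and let v : ℝ × ℝ → ℂ be twice continuously differentiable on an open set containing the closed rectangle [0, a] × [0, b], satisfying Δv + k²·v = 0 on [0, a] × [0, b] (where Δv = ∂₁₁v + ∂₂₂v). Then the imaginary part of the boundary integral of (∂v/∂n)·conj(v) vanishes; explicitly, Im( ∫₀ᵇ ∂₁v(a, y)·conj(v(a, y)) dy − ∫₀ᵇ ∂₁v(0, y)·conj(v(0, y)) dy + ∫₀ᵃ ∂₂v(x, b)·conj(v(x, b)) dx − ∫₀ᵃ ∂₂v(x, 0)·conj(v(x, 0)) dx ) = 0. -/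
open Complex

/-- First partial derivative of `v : ℝ × ℝ → ℂ` with respect to the first argument. -/
noncomputable def pd1 (v : ℝ × ℝ → ℂ) (p : ℝ × ℝ) : ℂ :=
  deriv (fun t => v (t, p.2)) p.1

/-- First partial derivative of `v : ℝ × ℝ → ℂ` with respect to the second argument. -/
noncomputable def pd2 (v : ℝ × ℝ → ℂ) (p : ℝ × ℝ) : ℂ :=
  deriv (fun t => v (p.1, t)) p.2

/-- Second partial derivative of `v` with respect to the first argument. -/
noncomputable def pd11 (v : ℝ × ℝ → ℂ) (p : ℝ × ℝ) : ℂ :=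
  deriv (fun t => pd1 v (t, p.2)) p.1

/-- Second partial derivative of `v` with respect to the second argument. -/
noncomputable def pd22 (v : ℝ × ℝ → ℂ) (p : ℝ × ℝ) : ℂ :=
  deriv (fun t => pd2 v (p.1, t)) p.2

/-! The divergence theorem for the field `(∂₁v · v̄, ∂₂v · v̄)` on the rectangle (Green's first
identity) turns the boundary flux into `∫∫ (Δv · v̄ + |∇v|²)`, and the Helmholtz equation makes
this integrand `|∇v|² - k²|v|²`, which is real. -/

open MeasureTheory Set
open scoped ComplexConjugate Interval

section PartialDerivatives

variable {f g : ℝ × ℝ → ℂ} {p : ℝ × ℝ}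

theorem hasDerivAt_pd1 (hf : DifferentiableAt ℝ f p) :
    HasDerivAt (fun t => f (t, p.2)) (fderiv ℝ f p (1, 0)) p.1 :=
  hf.hasFDerivAt.comp_hasDerivAt p.1 ((hasDerivAt_id p.1).prodMk (hasDerivAt_const p.1 p.2))

theorem hasDerivAt_pd2 (hf : DifferentiableAt ℝ f p) :
    HasDerivAt (fun t => f (p.1, t)) (fderiv ℝ f p (0, 1)) p.2 :=
  hf.hasFDerivAt.comp_hasDerivAt p.2 ((hasDerivAt_const p.2 p.1).prodMk (hasDerivAt_id p.2))

theorem pd1_eq_fderiv (hf : DifferentiableAt ℝ f p) : pd1 f p = fderiv ℝ f p (1, 0) :=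
  (hasDerivAt_pd1 hf).deriv

theorem pd2_eq_fderiv (hf : DifferentiableAt ℝ f p) : pd2 f p = fderiv ℝ f p (0, 1) :=
  (hasDerivAt_pd2 hf).deriv

theorem pd11_eq_pd1_pd1 : pd11 f = pd1 (pd1 f) := rfl

theorem pd22_eq_pd2_pd2 : pd22 f = pd2 (pd2 f) := rfl

theorem pd1_mul_conj (hf : DifferentiableAt ℝ f p) (hg : DifferentiableAt ℝ g p) :
    pd1 (fun q => f q * conj (g q)) p = pd1 f p * conj (g p) + f p * conj (pd1 g p) := by
  rw [pd1_eq_fderiv hf, pd1_eq_fderiv hg]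
  exact ((hasDerivAt_pd1 hf).mul (hasDerivAt_pd1 hg).star).deriv

theorem pd2_mul_conj (hf : DifferentiableAt ℝ f p) (hg : DifferentiableAt ℝ g p) :
    pd2 (fun q => f q * conj (g q)) p = pd2 f p * conj (g p) + f p * conj (pd2 g p) := by
  rw [pd2_eq_fderiv hf, pd2_eq_fderiv hg]
  exact ((hasDerivAt_pd2 hf).mul (hasDerivAt_pd2 hg).star).deriv

theorem pd1_pd1_mul_conj_add_pd2_pd2_mul_conj (hf : DifferentiableAt ℝ f p)
    (hf₁ : DifferentiableAt ℝ (pd1 f) p) (hf₂ : DifferentiableAt ℝ (pd2 f) p) :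
    pd1 (fun q => pd1 f q * conj (f q)) p + pd2 (fun q => pd2 f q * conj (f q)) p =
      (pd11 f p + pd22 f p) * conj (f p) + ((normSq (pd1 f p) + normSq (pd2 f p) : ℝ) : ℂ) := by
  rw [pd1_mul_conj hf₁ hf, pd2_mul_conj hf₂ hf, pd11_eq_pd1_pd1, pd22_eq_pd2_pd2, ofReal_add,
    ← mul_conj, ← mul_conj]
  ring

variable {O : Set (ℝ × ℝ)} {n : WithTop ℕ∞}

theorem ContDiffOn.pd1 (hf : ContDiffOn ℝ (n + 1) f O) (hO : IsOpen O) :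
    ContDiffOn ℝ n (pd1 f) O :=
  ((hf.fderiv_of_isOpen hO le_rfl).clm_apply contDiffOn_const).congr fun p hp =>
    pd1_eq_fderiv ((hf.contDiffAt (hO.mem_nhds hp)).differentiableAt (by simp))

theorem ContDiffOn.pd2 (hf : ContDiffOn ℝ (n + 1) f O) (hO : IsOpen O) :
    ContDiffOn ℝ n (pd2 f) O :=
  ((hf.fderiv_of_isOpen hO le_rfl).clm_apply contDiffOn_const).congr fun p hp =>
    pd2_eq_fderiv ((hf.contDiffAt (hO.mem_nhds hp)).differentiableAt (by simp))

end PartialDerivatives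

section Rectangle

variable {O : Set (ℝ × ℝ)} {a₁ a₂ b₁ b₂ : ℝ}

theorem integral2_pd1_add_pd2 {f g : ℝ × ℝ → ℂ} (hO : IsOpen O)
    (hsub : [[a₁, b₁]] ×ˢ [[a₂, b₂]] ⊆ O) (hf : ContDiffOn ℝ 1 f O) (hg : ContDiffOn ℝ 1 g O) :
    (∫ x in a₁..b₁, ∫ y in a₂..b₂, pd1 f (x, y) + pd2 g (x, y)) =
      (((∫ x in a₁..b₁, g (x, b₂)) - ∫ x in a₁..b₁, g (x, a₂)) + ∫ y in a₂..b₂, f (b₁, y)) -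
        ∫ y in a₂..b₂, f (a₁, y) := by
  have hfd : ∀ p ∈ O, DifferentiableAt ℝ f p := fun p hp =>
    (hf.contDiffAt (hO.mem_nhds hp)).differentiableAt one_ne_zero
  have hgd : ∀ p ∈ O, DifferentiableAt ℝ g p := fun p hp =>
    (hg.contDiffAt (hO.mem_nhds hp)).differentiableAt one_ne_zero
  have hint : ∀ p ∈ Ioo (min a₁ b₁) (max a₁ b₁) ×ˢ Ioo (min a₂ b₂) (max a₂ b₂), p ∈ O :=
    fun p hp => hsub ⟨Ioo_subset_Icc_self hp.1, Ioo_subset_Icc_self hp.2⟩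
  have hcont : ContinuousOn (fun p => fderiv ℝ f p (1, 0) + fderiv ℝ g p (0, 1)) O :=
    ((hf.continuousOn_fderiv_of_isOpen hO le_rfl).clm_apply continuousOn_const).add
      ((hg.continuousOn_fderiv_of_isOpen hO le_rfl).clm_apply continuousOn_const)
  rw [← integral2_divergence_prod_of_hasFDerivAt f g (fderiv ℝ f) (fderiv ℝ g) a₁ a₂ b₁ b₂
    (hf.continuousOn.mono hsub) (hg.continuousOn.mono hsub)
    (fun p hp => (hfd p (hint p hp)).hasFDerivAt) (fun p hp => (hgd p (hint p hp)).hasFDerivAt)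
    ((hcont.mono hsub).integrableOn_compact (isCompact_uIcc.prod isCompact_uIcc))]
  refine intervalIntegral.integral_congr fun x hx => intervalIntegral.integral_congr fun y hy => ?_
  rw [pd1_eq_fderiv (hfd _ (hsub ⟨hx, hy⟩)), pd2_eq_fderiv (hgd _ (hsub ⟨hx, hy⟩))]

theorem integral2_green_first_identity {v : ℝ × ℝ → ℂ} (hO : IsOpen O)
    (hsub : [[a₁, b₁]] ×ˢ [[a₂, b₂]] ⊆ O) (hv : ContDiffOn ℝ 2 v O) :
    (∫ y in a₂..b₂, pd1 v (b₁, y) * conj (v (b₁, y)))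
        - (∫ y in a₂..b₂, pd1 v (a₁, y) * conj (v (a₁, y)))
        + (∫ x in a₁..b₁, pd2 v (x, b₂) * conj (v (x, b₂)))
        - (∫ x in a₁..b₁, pd2 v (x, a₂) * conj (v (x, a₂))) =
      ∫ x in a₁..b₁, ∫ y in a₂..b₂, (pd11 v (x, y) + pd22 v (x, y)) * conj (v (x, y)) +
        ((normSq (pd1 v (x, y)) + normSq (pd2 v (x, y)) : ℝ) : ℂ) := by
  have hv₁ : ContDiffOn ℝ 1 v O := hv.of_le (by norm_num)
  have h₁ : ContDiffOn ℝ 1 (pd1 v) O := hv.pd1 hO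
  have h₂ : ContDiffOn ℝ 1 (pd2 v) O := hv.pd2 hO
  have hconj : ContDiffOn ℝ 1 (fun p => conj (v p)) O := conjCLE.contDiff.comp_contDiffOn hv₁
  have hd : ∀ {u : ℝ × ℝ → ℂ}, ContDiffOn ℝ 1 u O → ∀ p ∈ O, DifferentiableAt ℝ u p :=
    fun hu p hp => (hu.contDiffAt (hO.mem_nhds hp)).differentiableAt one_ne_zero
  have hpt : ∀ x ∈ [[a₁, b₁]], ∀ y ∈ [[a₂, b₂]],
      pd1 (fun q => pd1 v q * conj (v q)) (x, y) + pd2 (fun q => pd2 v q * conj (v q)) (x, y) =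
        (pd11 v (x, y) + pd22 v (x, y)) * conj (v (x, y)) +
          ((normSq (pd1 v (x, y)) + normSq (pd2 v (x, y)) : ℝ) : ℂ) := fun x hx y hy =>
    have hp : (x, y) ∈ O := hsub ⟨hx, hy⟩
    pd1_pd1_mul_conj_add_pd2_pd2_mul_conj (hd hv₁ _ hp) (hd h₁ _ hp) (hd h₂ _ hp)
  rw [← intervalIntegral.integral_congr fun x hx => intervalIntegral.integral_congr (hpt x hx),
    integral2_pd1_add_pd2 hO hsub (h₁.mul hconj) (h₂.mul hconj)]
  ring

end Rectangle

/-- **Identity (3.15)/(eq:norm1) on the rectangular canonical domain.** If `v` is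
twice continuously differentiable on an open set containing `[0,a] × [0,b]` and
satisfies the Helmholtz equation `Δv + k² v = 0` there (`k` real), then the
imaginary part of the boundary integral of the outward normal derivative of `v`
times the conjugate of `v` vanishes. -/
theorem helmholtz_boundary_integral_im_eq_zero (k a b : ℝ) (ha : 0 < a) (hb : 0 < b)
    (O : Set (ℝ × ℝ)) (hO : IsOpen O)
    (hsub : Set.Icc ((0 : ℝ), (0 : ℝ)) (a, b) ⊆ O)
    (v : ℝ × ℝ → ℂ) (hv : ContDiffOn ℝ 2 v O)
    (hPDE : ∀ p ∈ Set.Icc ((0 : ℝ), (0 : ℝ)) (a, b),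
      pd11 v p + pd22 v p + (k : ℂ) ^ 2 * v p = 0) :
    ((∫ y in (0:ℝ)..b, pd1 v (a, y) * (starRingEnd ℂ) (v (a, y)))
      - (∫ y in (0:ℝ)..b, pd1 v (0, y) * (starRingEnd ℂ) (v (0, y)))
      + (∫ x in (0:ℝ)..a, pd2 v (x, b) * (starRingEnd ℂ) (v (x, b)))
      - (∫ x in (0:ℝ)..a, pd2 v (x, 0) * (starRingEnd ℂ) (v (x, 0)))).im = 0 := by
  have hrect : [[0, a]] ×ˢ [[0, b]] = Icc (0, 0) (a, b) := by
    rw [uIcc_of_le ha.le, uIcc_of_le hb.le, Icc_prod_Icc]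
  have hreal : ∀ p ∈ Icc (0, 0) (a, b),
      (pd11 v p + pd22 v p) * conj (v p) + ((normSq (pd1 v p) + normSq (pd2 v p) : ℝ) : ℂ) =
        ((normSq (pd1 v p) + normSq (pd2 v p) - k ^ 2 * normSq (v p) : ℝ) : ℂ) := by
    intro p hp
    push_cast
    rw [← mul_conj (v p)]
    linear_combination conj (v p) * hPDE p hp
  rw [integral2_green_first_identity hO (hrect ▸ hsub) hv,
    intervalIntegral.integral_congr fun x hx => intervalIntegral.integral_congr fun y hy =>
      hreal (x, y) (hrect ▸ ⟨hx, hy⟩)]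
  simp only [intervalIntegral.integral_ofReal, ofReal_im]
end
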